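/- arXiv:1705.02656 — 10 statements merged into one kernel-verified Lean document; each statement's English description precedes it below -/
import Mathlib

section
/- For every n ≥ 1 there is a k-module isomorphism H₁((A,B,ε);M) ≅ H₁((Mₙ(A),B,ε_*);Mₙ(M)), where ε_* : B → Mₙ(A) sends α to the scalar matrix ε(α)·Iₙ and Mₙ(M) is the Mₙ(A)-bimodule of n×n matrices with entries in M (under matrix multiplication), which is B-symmetric with respect to ε_*. -/
open TensorProduct MulOpposite

set_option maxSynthPendingDepth 8

/-!
Both homology groups are computed from truncated complexes `C₂ → C₁ → C₀`. The corner embedding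
`m ⊗ a ↦ m E₁₁ ⊗ a E₁₁` and the generalized trace `N ⊗ X ↦ ∑ N_pq ⊗ X_qp` are chain maps in both
directions, and the trace is a left inverse of the corner embedding. Conversely, corner ∘ trace
is homotopic to the identity: evaluated at `α = 1` the second differential is the ordinary
Hochschild boundary, and the classical Morita homotopy
`N ⊗ X ↦ ∑ⱼ N E_j1 ⊗ E_1j ⊗ X ⊗ 1 - ∑ⱼₗ N E_j1 ⊗ E_1j X E_l1 ⊗ E_1l ⊗ 1`
shows that `y - corner (trace y)` is a boundary up to a term that vanishes on cycles.
-/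

section

variable {R C₀ C₁ C₂ D₀ D₁ D₂ : Type*} [CommRing R]
  [AddCommGroup C₀] [Module R C₀] [AddCommGroup C₁] [Module R C₁] [AddCommGroup C₂] [Module R C₂]
  [AddCommGroup D₀] [Module R D₀] [AddCommGroup D₁] [Module R D₁] [AddCommGroup D₂] [Module R D₂]

abbrev MiddleHomology (d₁ : C₁ →ₗ[R] C₀) (d₂ : C₂ →ₗ[R] C₁) : Type _ :=
  LinearMap.ker d₁ ⧸ (LinearMap.range d₂).comap (LinearMap.ker d₁).subtype

namespace MiddleHomology

variable {d₁ : C₁ →ₗ[R] C₀} {d₂ : C₂ →ₗ[R] C₁} {e₁ : D₁ →ₗ[R] D₀} {e₂ : D₂ →ₗ[R] D₁}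

def map (f₀ : C₀ →ₗ[R] D₀) (f₁ : C₁ →ₗ[R] D₁) (f₂ : C₂ →ₗ[R] D₂)
    (h₁ : e₁ ∘ₗ f₁ = f₀ ∘ₗ d₁) (h₂ : e₂ ∘ₗ f₂ = f₁ ∘ₗ d₂) :
    MiddleHomology d₁ d₂ →ₗ[R] MiddleHomology e₁ e₂ :=
  Submodule.mapQ _ _ (f₁.restrict fun x (hx : d₁ x = 0) =>
      show e₁ (f₁ x) = 0 by rw [← LinearMap.comp_apply, h₁, LinearMap.comp_apply, hx, map_zero])
    (by
      rintro x ⟨y, hy⟩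
      exact ⟨f₂ y, by rw [← LinearMap.comp_apply, h₂, LinearMap.comp_apply, hy]; rfl⟩)

def equivOfRetract (f₀ : C₀ →ₗ[R] D₀) (f₁ : C₁ →ₗ[R] D₁) (f₂ : C₂ →ₗ[R] D₂)
    (hf₁ : e₁ ∘ₗ f₁ = f₀ ∘ₗ d₁) (hf₂ : e₂ ∘ₗ f₂ = f₁ ∘ₗ d₂)
    (g₀ : D₀ →ₗ[R] C₀) (g₁ : D₁ →ₗ[R] C₁) (g₂ : D₂ →ₗ[R] C₂)
    (hg₁ : d₁ ∘ₗ g₁ = g₀ ∘ₗ e₁) (hg₂ : d₂ ∘ₗ g₂ = g₁ ∘ₗ e₂)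
    (hgf : g₁ ∘ₗ f₁ = LinearMap.id) (hfg : ∀ y, e₁ y = 0 → f₁ (g₁ y) - y ∈ LinearMap.range e₂) :
    MiddleHomology d₁ d₂ ≃ₗ[R] MiddleHomology e₁ e₂ :=
  .ofLinearMap (map f₀ f₁ f₂ hf₁ hf₂) (map g₀ g₁ g₂ hg₁ hg₂)
    (Submodule.linearMap_qext _ <| LinearMap.ext fun y =>
      (Submodule.Quotient.eq _).mpr (hfg y y.2))
    (Submodule.linearMap_qext _ <| LinearMap.ext fun x =>
      congrArg Submodule.Quotient.mk (Subtype.ext (LinearMap.congr_fun hgf x)))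

end MiddleHomology

end

namespace Matrix

section scalar

variable {A n : Type*} [Ring A] [Fintype n] [DecidableEq n]

lemma mul_scalar_apply (X : Matrix n n A) (c : A) (i j : n) :
    (X * scalar n c) i j = X i j * c := by
  rw [scalar_apply, mul_diagonal]

lemma single_mul_scalar (i j : n) (a c : A) : single i j a * scalar n c = single i j (a * c) := by
  ext p q
  simp only [mul_scalar_apply, single_apply]
  split_ifs <;> simp

end scalar

variable (k : Type*) [CommRing k] {A M n : Type*} [Ring A] [Algebra k A]
  [AddCommGroup M] [Module k M] [Fintype n]

section left

variable [Module A M] [IsScalarTower k A M]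

def leftAct : Matrix n n A →ₗ[k] Matrix n n M →ₗ[k] Matrix n n M :=
  LinearMap.mk₂ k (fun X N => of fun i j => ∑ l, X i l • N l j)
    (fun _ _ _ => by ext; simp [add_smul, Finset.sum_add_distrib])
    (fun _ _ _ => by ext; simp [smul_assoc, Finset.smul_sum])
    (fun _ _ _ => by ext; simp [Finset.sum_add_distrib])
    (fun _ _ _ => by ext; simp [smul_comm _ (_ : k), Finset.smul_sum])

@[simp]
lemma leftAct_apply (X : Matrix n n A) (N : Matrix n n M) (i j : n) :
    leftAct k X N i j = ∑ l, X i l • N l j := rfl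

variable [DecidableEq n]

@[simp]
lemma leftAct_scalar (N : Matrix n n M) (c : A) : leftAct k (scalar n c) N = c • N := by
  ext i j
  simp [diagonal_apply, ite_smul]

lemma leftAct_single_single (i j l : n) (a : A) (m : M) :
    leftAct k (single i j a) (single j l m) = single i l (a • m) := by
  ext p q
  simp only [leftAct_apply, single_apply]
  by_cases hp : i = p <;> by_cases hq : l = q <;> simp [hp, hq, ite_smul]

end left

section right

variable [Module Aᵐᵒᵖ M] [IsScalarTower k Aᵐᵒᵖ M]

def rightAct : Matrix n n M →ₗ[k] Matrix n n A →ₗ[k] Matrix n n M :=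
  LinearMap.mk₂ k (fun N X => of fun i j => ∑ l, op (X l j) • N i l)
    (fun _ _ _ => by ext; simp [Finset.sum_add_distrib])
    (fun _ _ _ => by ext; simp [smul_comm _ (_ : k), Finset.smul_sum])
    (fun _ _ _ => by ext; simp [add_smul, Finset.sum_add_distrib])
    (fun _ _ _ => by ext; simp [op_smul, smul_assoc, Finset.smul_sum])

@[simp]
lemma rightAct_apply (N : Matrix n n M) (X : Matrix n n A) (i j : n) :
    rightAct k N X i j = ∑ l, op (X l j) • N i l := rfl

lemma rightAct_rightAct (N : Matrix n n M) (X Y : Matrix n n A) :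
    rightAct k (rightAct k N X) Y = rightAct k N (X * Y) := by
  ext i j
  simp only [rightAct_apply, mul_apply, Finset.op_sum, Finset.sum_smul, Finset.smul_sum, op_mul,
    mul_smul]
  exact Finset.sum_comm

variable [DecidableEq n]

@[simp]
lemma rightAct_one (N : Matrix n n M) : rightAct k N (1 : Matrix n n A) = N := by
  ext i j
  simp [one_apply, apply_ite op, ite_smul]

@[simp]
lemma rightAct_scalar (N : Matrix n n M) (c : A) : rightAct k N (scalar n c) = op c • N := by
  ext i j
  simp [diagonal_apply, apply_ite op, ite_smul]

lemma rightAct_single_single (i j l : n) (m : M) (a : A) :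
    rightAct k (single i j m) (single j l a) = single i l (op a • m) := by
  ext p q
  simp only [rightAct_apply, single_apply]
  by_cases hp : i = p <;> by_cases hq : l = q <;> simp [hp, hq, apply_ite op, ite_smul]

end right

section bimodule

variable [Module A M] [IsScalarTower k A M] [Module Aᵐᵒᵖ M] [IsScalarTower k Aᵐᵒᵖ M]

lemma leftAct_rightAct [SMulCommClass A Aᵐᵒᵖ M] (X Y : Matrix n n A) (N : Matrix n n M) :
    leftAct k X (rightAct k N Y) = rightAct k (leftAct k X N) Y := by
  ext i j
  simp only [leftAct_apply, rightAct_apply, Finset.smul_sum, smul_comm (X _ _) (op _)]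
  exact Finset.sum_comm

lemma single_leftAct_rightAct_single [DecidableEq n] (i j l i' : n) (N : Matrix n n M) :
    leftAct k (single i j (1 : A)) (rightAct k N (single l i' (1 : A))) = single i i' (N j l) := by
  ext p q
  simp only [leftAct_apply, rightAct_apply, single_apply]
  by_cases hp : i = p <;> by_cases hq : i' = q <;> simp [hp, hq, apply_ite op, ite_smul]

end bimodule

end Matrix

namespace SecondaryHochschild

open Matrix

section chainMaps

variable (k : Type*) [CommRing k] {M A B n : Type*} [AddCommGroup M] [Module k M]
  [AddCommGroup A] [Module k A] [AddCommGroup B] [Module k B]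

section corner

variable [DecidableEq n]

def corner₁ (i : n) : M ⊗[k] A →ₗ[k] Matrix n n M ⊗[k] Matrix n n A :=
  map (singleLinearMap k i i) (singleLinearMap k i i)

def corner₂ (i : n) :
    M ⊗[k] A ⊗[k] A ⊗[k] B →ₗ[k] Matrix n n M ⊗[k] Matrix n n A ⊗[k] Matrix n n A ⊗[k] B :=
  map (map (corner₁ k i) (singleLinearMap k i i)) LinearMap.id

@[simp]
lemma corner₁_tmul (i : n) (m : M) (a : A) :
    corner₁ k i (m ⊗ₜ a) = single i i m ⊗ₜ single i i a := rfl

@[simp]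
lemma corner₂_tmul (i : n) (m : M) (a b : A) (β : B) :
    corner₂ k i (m ⊗ₜ a ⊗ₜ b ⊗ₜ β) = single i i m ⊗ₜ single i i a ⊗ₜ single i i b ⊗ₜ β := rfl

end corner

variable [Fintype n]

def trace₁ : Matrix n n M ⊗[k] Matrix n n A →ₗ[k] M ⊗[k] A :=
  ∑ p, ∑ q, map (entryLinearMap k M p q) (entryLinearMap k A q p)

def trace₂ :
    Matrix n n M ⊗[k] Matrix n n A ⊗[k] Matrix n n A ⊗[k] B →ₗ[k] M ⊗[k] A ⊗[k] A ⊗[k] B :=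
  ∑ p, ∑ q, ∑ r,
    map (map (map (entryLinearMap k M p q) (entryLinearMap k A q r)) (entryLinearMap k A r p))
      LinearMap.id

@[simp]
lemma trace₁_tmul (N : Matrix n n M) (X : Matrix n n A) :
    trace₁ k (N ⊗ₜ X) = ∑ p, ∑ q, N p q ⊗ₜ X q p := by
  simp [trace₁, LinearMap.sum_apply]

@[simp]
lemma trace₂_tmul (N : Matrix n n M) (X Y : Matrix n n A) (β : B) :
    trace₂ k (N ⊗ₜ X ⊗ₜ Y ⊗ₜ β) = ∑ p, ∑ q, ∑ r, N p q ⊗ₜ X q r ⊗ₜ Y r p ⊗ₜ β := by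
  simp [trace₂, LinearMap.sum_apply]

lemma trace₁_comp_corner₁ [DecidableEq n] (i : n) :
    trace₁ k ∘ₗ corner₁ k i = (LinearMap.id : M ⊗[k] A →ₗ[k] _) := by
  refine TensorProduct.ext' fun m a => ?_
  simp only [LinearMap.comp_apply, corner₁_tmul, trace₁_tmul, LinearMap.id_apply]
  rw [Finset.sum_eq_single i (fun p _ hp => by simp [Ne.symm hp]) (by simp),
    Finset.sum_eq_single i (fun q _ hq => by simp [Ne.symm hq]) (by simp)]
  simp

end chainMaps

section cornerHomotopy

variable (k : Type*) [CommRing k] {M A n : Type*} [Ring A] [Algebra k A]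
  [AddCommGroup M] [Module k M] [Module Aᵐᵒᵖ M] [IsScalarTower k Aᵐᵒᵖ M]
  [Fintype n] [DecidableEq n]

def cornerHomotopy (i : n) : Matrix n n M →ₗ[k] Matrix n n M ⊗[k] Matrix n n A :=
  ∑ j, (TensorProduct.mk k _ _).flip (single i j (1 : A)) ∘ₗ (rightAct k).flip (single j i (1 : A))

@[simp]
lemma cornerHomotopy_apply (i : n) (N : Matrix n n M) :
    cornerHomotopy k i N = ∑ j, rightAct k N (single j i (1 : A)) ⊗ₜ single i j (1 : A) := by
  simp [cornerHomotopy, LinearMap.sum_apply]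

end cornerHomotopy

section complexes

variable (k : Type*) [CommRing k] {M A B n : Type*} [Ring A] [Algebra k A]
  [AddCommGroup M] [Module k M] [Module A M] [Module Aᵐᵒᵖ M]
  [IsScalarTower k A M] [IsScalarTower k Aᵐᵒᵖ M] [AddCommGroup B] [Module k B]
  [Fintype n]

theorem comp_trace₁ {p₁ : M ⊗[k] A →ₗ[k] M}
    (hp₁ : ∀ m a, p₁ (m ⊗ₜ a) = op a • m - a • m)
    {q₁ : Matrix n n M ⊗[k] Matrix n n A →ₗ[k] Matrix n n M}
    (hq₁ : ∀ N X, q₁ (N ⊗ₜ X) = rightAct k N X - leftAct k X N) :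
    p₁ ∘ₗ trace₁ k = traceLinearMap n k M ∘ₗ q₁ := by
  refine TensorProduct.ext' fun N X => ?_
  simp only [LinearMap.comp_apply, trace₁_tmul, map_sum, hp₁, hq₁, traceLinearMap_apply, trace,
    diag_apply, Matrix.sub_apply, rightAct_apply, leftAct_apply, Finset.sum_sub_distrib]
  rw [sub_right_inj]
  exact Finset.sum_comm

variable [DecidableEq n]

theorem comp_corner₁ (i : n) {p₁ : M ⊗[k] A →ₗ[k] M}
    (hp₁ : ∀ m a, p₁ (m ⊗ₜ a) = op a • m - a • m)
    {q₁ : Matrix n n M ⊗[k] Matrix n n A →ₗ[k] Matrix n n M}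
    (hq₁ : ∀ N X, q₁ (N ⊗ₜ X) = rightAct k N X - leftAct k X N) :
    q₁ ∘ₗ corner₁ k i = singleLinearMap k i i ∘ₗ p₁ := by
  refine TensorProduct.ext' fun m a => ?_
  simp only [LinearMap.comp_apply, corner₁_tmul, hp₁, hq₁, map_sub, singleLinearMap_apply,
    rightAct_single_single, leftAct_single_single]

theorem comp_corner₂ (i : n) (ε : B → A) {p₂ : M ⊗[k] A ⊗[k] A ⊗[k] B →ₗ[k] M ⊗[k] A}
    (hp₂ : ∀ m a b β, p₂ (m ⊗ₜ a ⊗ₜ b ⊗ₜ β) =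
      (op (a * ε β) • m) ⊗ₜ b - m ⊗ₜ (a * ε β * b) + ((b * ε β) • m) ⊗ₜ a)
    {q₂ : Matrix n n M ⊗[k] Matrix n n A ⊗[k] Matrix n n A ⊗[k] B →ₗ[k]
      Matrix n n M ⊗[k] Matrix n n A}
    (hq₂ : ∀ N X Y β, q₂ (N ⊗ₜ X ⊗ₜ Y ⊗ₜ β) =
      rightAct k N (X * scalar n (ε β)) ⊗ₜ Y - N ⊗ₜ (X * scalar n (ε β) * Y)
        + leftAct k (Y * scalar n (ε β)) N ⊗ₜ X) :
    q₂ ∘ₗ corner₂ k i = corner₁ k i ∘ₗ p₂ := by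
  ext m a b β
  simp only [TensorProduct.AlgebraTensorModule.curry_apply, TensorProduct.curry_apply,
    LinearMap.coe_restrictScalars, LinearMap.comp_apply, corner₂_tmul, corner₁_tmul, hp₂, hq₂,
    map_add, map_sub, single_mul_scalar, single_mul_single_same, rightAct_single_single,
    leftAct_single_single]

theorem comp_trace₂ (ε : B → A) {p₂ : M ⊗[k] A ⊗[k] A ⊗[k] B →ₗ[k] M ⊗[k] A}
    (hp₂ : ∀ m a b β, p₂ (m ⊗ₜ a ⊗ₜ b ⊗ₜ β) =
      (op (a * ε β) • m) ⊗ₜ b - m ⊗ₜ (a * ε β * b) + ((b * ε β) • m) ⊗ₜ a)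
    {q₂ : Matrix n n M ⊗[k] Matrix n n A ⊗[k] Matrix n n A ⊗[k] B →ₗ[k]
      Matrix n n M ⊗[k] Matrix n n A}
    (hq₂ : ∀ N X Y β, q₂ (N ⊗ₜ X ⊗ₜ Y ⊗ₜ β) =
      rightAct k N (X * scalar n (ε β)) ⊗ₜ Y - N ⊗ₜ (X * scalar n (ε β) * Y)
        + leftAct k (Y * scalar n (ε β)) N ⊗ₜ X) :
    p₂ ∘ₗ trace₂ k = trace₁ k ∘ₗ q₂ := by
  ext N X Y β
  simp only [TensorProduct.AlgebraTensorModule.curry_apply, TensorProduct.curry_apply,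
    LinearMap.coe_restrictScalars, LinearMap.comp_apply, trace₂_tmul, map_sum, hp₂, hq₂, map_add,
    map_sub, trace₁_tmul, rightAct_apply, leftAct_apply, mul_apply (M := X * scalar n (ε β)),
    mul_scalar_apply]
  simp only [sum_tmul, tmul_sum, Finset.sum_add_distrib, Finset.sum_sub_distrib]
  congr 1
  · congr 1
    exact Finset.sum_congr rfl fun _ _ => Finset.sum_comm
  · exact Finset.sum_comm.trans ((Finset.sum_congr rfl fun _ _ => Finset.sum_comm).trans
      Finset.sum_comm)

theorem corner₁_trace₁_sub_mem_range [SMulCommClass A Aᵐᵒᵖ M] (i : n)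
    {q₁ : Matrix n n M ⊗[k] Matrix n n A →ₗ[k] Matrix n n M}
    (hq₁ : ∀ N X, q₁ (N ⊗ₜ X) = rightAct k N X - leftAct k X N)
    {q₂ : Matrix n n M ⊗[k] Matrix n n A ⊗[k] Matrix n n A ⊗[k] B →ₗ[k]
      Matrix n n M ⊗[k] Matrix n n A} (β : B)
    (hq₂ : ∀ N X Y, q₂ (N ⊗ₜ X ⊗ₜ Y ⊗ₜ β) =
      rightAct k N X ⊗ₜ Y - N ⊗ₜ (X * Y) + leftAct k Y N ⊗ₜ X)
    (y : Matrix n n M ⊗[k] Matrix n n A) (hy : q₁ y = 0) :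
    corner₁ k i (trace₁ k y) - y ∈ LinearMap.range q₂ := by
  have homotopy : ∀ y,
      y - corner₁ k i (trace₁ k y) - cornerHomotopy k i (q₁ y) ∈ LinearMap.range q₂ := by
    intro y
    induction y using TensorProduct.induction_on with
    | zero => simp
    | add y z hy hz =>
      convert add_mem hy hz using 1
      simp only [map_add]
      abel
    | tmul N X =>
      let E : n → n → Matrix n n A := fun p q => single p q 1
      have h₁ : ∑ j, rightAct k (rightAct k N (E j i)) (E i j) ⊗ₜ X = N ⊗ₜ[k] X := by
        simp_rw [← sum_tmul, E, rightAct_rightAct, single_mul_single_same, mul_one, ← map_sum,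
          sum_single_one, rightAct_one]
      have h₂ : ∑ j, ∑ l, rightAct k N (E j i) ⊗ₜ (E i j * X * E l i * E i l)
          = ∑ j, rightAct k N (E j i) ⊗ₜ[k] (E i j * X) := by
        simp_rw [← tmul_sum, E, mul_assoc (single i _ 1 * X), single_mul_single_same, mul_one,
          ← Finset.mul_sum, sum_single_one, mul_one]
      have h₃ : ∑ j, leftAct k X (rightAct k N (E j i)) ⊗ₜ E i j
          = cornerHomotopy k i (leftAct k X N) := by
        simp [E, leftAct_rightAct]
      have h₄ : ∑ j, ∑ l, rightAct k (rightAct k N (E j i)) (E i j * X * E l i) ⊗ₜ E i l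
          = cornerHomotopy k i (rightAct k N X) := by
        rw [Finset.sum_comm]
        simp_rw [cornerHomotopy_apply, E, rightAct_rightAct, ← sum_tmul, ← map_sum, ← mul_assoc,
          single_mul_single_same, mul_one, ← Finset.sum_mul, sum_single_one, one_mul]
      have h₅ : ∑ j, ∑ l, leftAct k (E i l) (rightAct k N (E j i)) ⊗ₜ (E i j * X * E l i)
          = corner₁ k i (trace₁ k (N ⊗ₜ X)) := by
        rw [Finset.sum_comm]
        simp [E, single_leftAct_rightAct_single, single_mul_mul_single]
      refine ⟨∑ j, rightAct k N (E j i) ⊗ₜ E i j ⊗ₜ X ⊗ₜ β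
        - ∑ j, ∑ l, rightAct k N (E j i) ⊗ₜ (E i j * X * E l i) ⊗ₜ E i l ⊗ₜ β, ?_⟩
      simp only [map_sub, map_sum, hq₂, hq₁, Finset.sum_add_distrib, Finset.sum_sub_distrib]
      rw [h₁, h₂, h₃, h₄, h₅]
      abel
  simpa [hy] using neg_mem (homotopy y)

end complexes

end SecondaryHochschild

open Matrix SecondaryHochschild in
theorem secondaryHochschild_H1_matrix_invariance_general
    (k : Type*) [CommRing k]
    (A : Type*) [Ring A] [Algebra k A]
    (B : Type*) [CommRing B] [Algebra k B]
    (ε : B →ₐ[k] A)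
    (M : Type*) [AddCommGroup M] [Module k M]
    [Module A M] [Module Aᵐᵒᵖ M] [SMulCommClass A Aᵐᵒᵖ M]
    [IsScalarTower k A M] [IsScalarTower k Aᵐᵒᵖ M]
    (hsymm : ∀ (b : B) (m : M), ε b • m = op (ε b) • m)
    (n : ℕ) (hn : 1 ≤ n)
    -- the secondary Hochschild differentials ∂₁, ∂₂ of (A,B,ε) with coefficients in M
    (p1 : M ⊗[k] A →ₗ[k] M)
    (hp1 : ∀ (m : M) (a : A), p1 (m ⊗ₜ[k] a) = op a • m - a • m)
    (p2 : M ⊗[k] A ⊗[k] A ⊗[k] B →ₗ[k] M ⊗[k] A)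
    (hp2 : ∀ (m : M) (a b : A) (α : B),
      p2 (m ⊗ₜ[k] a ⊗ₜ[k] b ⊗ₜ[k] α) =
        (op (a * ε α) • m) ⊗ₜ[k] b - m ⊗ₜ[k] (a * ε α * b) + ((b * ε α) • m) ⊗ₜ[k] a)
    -- the secondary Hochschild differentials ∂₁', ∂₂' of (Mₙ(A),B,ε_*) with
    -- coefficients in Mₙ(M); matrices act on Mₙ(M) by matrix multiplication
    (q1 : (Matrix (Fin n) (Fin n) M) ⊗[k] (Matrix (Fin n) (Fin n) A)
        →ₗ[k] Matrix (Fin n) (Fin n) M)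
    (hq1 : ∀ (N : Matrix (Fin n) (Fin n) M) (X : Matrix (Fin n) (Fin n) A),
      q1 (N ⊗ₜ[k] X) =
        (Matrix.of fun i j => ∑ l, op (X l j) • N i l)
        - Matrix.of fun i j => ∑ l, X i l • N l j)
    (q2 : (Matrix (Fin n) (Fin n) M) ⊗[k] (Matrix (Fin n) (Fin n) A)
            ⊗[k] (Matrix (Fin n) (Fin n) A) ⊗[k] B
        →ₗ[k] (Matrix (Fin n) (Fin n) M) ⊗[k] (Matrix (Fin n) (Fin n) A))
    (hq2 : ∀ (N : Matrix (Fin n) (Fin n) M) (X Y : Matrix (Fin n) (Fin n) A) (α : B),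
      q2 (N ⊗ₜ[k] X ⊗ₜ[k] Y ⊗ₜ[k] α) =
        (Matrix.of fun i j =>
            ∑ l, op ((X * Matrix.scalar (Fin n) (ε α)) l j) • N i l) ⊗ₜ[k] Y
        - N ⊗ₜ[k] (X * Matrix.scalar (Fin n) (ε α) * Y)
        + (Matrix.of fun i j =>
            ∑ l, (Y * Matrix.scalar (Fin n) (ε α)) i l • N l j) ⊗ₜ[k] X) :
    -- Mₙ(M) is B-symmetric with respect to ε_*
    (∀ (α : B) (N : Matrix (Fin n) (Fin n) M),
      (Matrix.of fun i j => ∑ l, (Matrix.scalar (Fin n) (ε α)) i l • N l j)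
        = Matrix.of fun i j => ∑ l, op ((Matrix.scalar (Fin n) (ε α)) l j) • N i l) ∧
    -- H₁((A,B,ε);M) ≅ H₁((Mₙ(A),B,ε_*);Mₙ(M)) as k-modules
    Nonempty
      ((↥(LinearMap.ker p1) ⧸ (LinearMap.range p2).comap (LinearMap.ker p1).subtype)
        ≃ₗ[k]
       (↥(LinearMap.ker q1) ⧸ (LinearMap.range q2).comap (LinearMap.ker q1).subtype)) := by
  refine ⟨fun α N => ?_, ?_⟩
  · change leftAct k (scalar (Fin n) (ε α)) N = rightAct k N (scalar (Fin n) (ε α))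
    rw [leftAct_scalar, rightAct_scalar]
    ext i j
    exact hsymm α (N i j)
  have hq2_one : ∀ N X Y, q2 (N ⊗ₜ X ⊗ₜ Y ⊗ₜ (1 : B)) =
      rightAct k N X ⊗ₜ Y - N ⊗ₜ (X * Y) + leftAct k Y N ⊗ₜ X := by
    intro N X Y
    have h := hq2 N X Y 1
    rw [map_one, map_one, mul_one, mul_one] at h
    exact h
  let i : Fin n := ⟨0, hn⟩
  exact ⟨MiddleHomology.equivOfRetract _ (corner₁ k i) (corner₂ k i)
    (comp_corner₁ k i hp1 hq1) (comp_corner₂ k i ε hp2 hq2) _ (trace₁ k) (trace₂ k)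
    (comp_trace₁ k hp1 hq1) (comp_trace₂ k ε hp2 hq2) (trace₁_comp_corner₁ k i)
    (corner₁_trace₁_sub_mem_range k i hq1 1 hq2_one)⟩

theorem secondaryHochschild_H1_matrix_invariance
    (k : Type*) [CommRing k]
    (A : Type*) [Ring A] [Algebra k A]
    (B : Type*) [CommRing B] [Algebra k B]
    (ε : B →ₐ[k] A) (hcen : ∀ (b : B) (a : A), ε b * a = a * ε b)
    (M : Type*) [AddCommGroup M] [Module k M]
    [Module A M] [Module Aᵐᵒᵖ M] [SMulCommClass A Aᵐᵒᵖ M]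
    [IsScalarTower k A M] [IsScalarTower k Aᵐᵒᵖ M]
    (hsymm : ∀ (b : B) (m : M), ε b • m = op (ε b) • m)
    (n : ℕ) (hn : 1 ≤ n)
    -- the secondary Hochschild differentials ∂₁, ∂₂ of (A,B,ε) with coefficients in M
    (p1 : M ⊗[k] A →ₗ[k] M)
    (hp1 : ∀ (m : M) (a : A), p1 (m ⊗ₜ[k] a) = op a • m - a • m)
    (p2 : M ⊗[k] A ⊗[k] A ⊗[k] B →ₗ[k] M ⊗[k] A)
    (hp2 : ∀ (m : M) (a b : A) (α : B),
      p2 (m ⊗ₜ[k] a ⊗ₜ[k] b ⊗ₜ[k] α) =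
        (op (a * ε α) • m) ⊗ₜ[k] b - m ⊗ₜ[k] (a * ε α * b) + ((b * ε α) • m) ⊗ₜ[k] a)
    -- the secondary Hochschild differentials ∂₁', ∂₂' of (Mₙ(A),B,ε_*) with
    -- coefficients in Mₙ(M); matrices act on Mₙ(M) by matrix multiplication
    (q1 : (Matrix (Fin n) (Fin n) M) ⊗[k] (Matrix (Fin n) (Fin n) A)
        →ₗ[k] Matrix (Fin n) (Fin n) M)
    (hq1 : ∀ (N : Matrix (Fin n) (Fin n) M) (X : Matrix (Fin n) (Fin n) A),
      q1 (N ⊗ₜ[k] X) =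
        (Matrix.of fun i j => ∑ l, op (X l j) • N i l)
        - Matrix.of fun i j => ∑ l, X i l • N l j)
    (q2 : (Matrix (Fin n) (Fin n) M) ⊗[k] (Matrix (Fin n) (Fin n) A)
            ⊗[k] (Matrix (Fin n) (Fin n) A) ⊗[k] B
        →ₗ[k] (Matrix (Fin n) (Fin n) M) ⊗[k] (Matrix (Fin n) (Fin n) A))
    (hq2 : ∀ (N : Matrix (Fin n) (Fin n) M) (X Y : Matrix (Fin n) (Fin n) A) (α : B),
      q2 (N ⊗ₜ[k] X ⊗ₜ[k] Y ⊗ₜ[k] α) =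
        (Matrix.of fun i j =>
            ∑ l, op ((X * Matrix.scalar (Fin n) (ε α)) l j) • N i l) ⊗ₜ[k] Y
        - N ⊗ₜ[k] (X * Matrix.scalar (Fin n) (ε α) * Y)
        + (Matrix.of fun i j =>
            ∑ l, (Y * Matrix.scalar (Fin n) (ε α)) i l • N l j) ⊗ₜ[k] X) :
    -- Mₙ(M) is B-symmetric with respect to ε_*
    (∀ (α : B) (N : Matrix (Fin n) (Fin n) M),
      (Matrix.of fun i j => ∑ l, (Matrix.scalar (Fin n) (ε α)) i l • N l j)
        = Matrix.of fun i j => ∑ l, op ((Matrix.scalar (Fin n) (ε α)) l j) • N i l) ∧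
    -- H₁((A,B,ε);M) ≅ H₁((Mₙ(A),B,ε_*);Mₙ(M)) as k-modules
    Nonempty
      ((↥(LinearMap.ker p1) ⧸ (LinearMap.range p2).comap (LinearMap.ker p1).subtype)
        ≃ₗ[k]
       (↥(LinearMap.ker q1) ⧸ (LinearMap.range q2).comap (LinearMap.ker q1).subtype)) :=
  secondaryHochschild_H1_matrix_invariance_general k A B ε M hsymm n hn p1 hp1 p2 hp2 q1 hq1 q2 hq2
end

section
/- Suppose A is commutative and M is A-symmetric (am = ma for all a ∈ A, m ∈ M). Then ∂₁ = 0, so H₁((A,B,ε);M) = (M⊗A)/im ∂₂, and there is a k-module isomorphism H₁((A,B,ε);M) ≅ M⊗_A Ω¹_{A/B}, where A is regarded as a B-algebra via ε and Ω¹_{A/B} denotes the module of Kähler differentials; the isomorphism sends the class of m⊗a to m⊗_A d(a), with inverse sending m⊗_A a·d(b) to the class of ma⊗b. -/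
/-!
Since `M` is symmetric, `∂₁ = 0` and `∂₂` is `A`-linear for the action of `A` on the `M` factor,
so its image `N` is an `A`-submodule of `M ⊗ A`. Modulo `N`, `[m ⊗ ab] = [am ⊗ b] + [bm ⊗ a]`
and `[m ⊗ ε(β)] = 0`, so `b ↦ (m ↦ [m ⊗ b])` is a `B`-derivation `A → Hom_A(M, (M ⊗ A)/N)`; it
induces `M ⊗_A Ω¹_{A/B} → (M ⊗ A)/N`, `m ⊗ db ↦ [m ⊗ b]`. Conversely `m ⊗ a ↦ m ⊗ da` kills `N`
by the Leibniz rule, and the two maps are mutually inverse on generators.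
-/

open TensorProduct MulOpposite

section

variable {R B A X : Type*} [CommSemiring R] [CommSemiring B] [CommSemiring A] [Algebra R A]
  [Algebra B A] [AddCommMonoid X] [Module A X] [Module R X] [IsScalarTower R A X] [Module B X]
  [IsScalarTower B A X]

def Derivation.extendScalars (d : Derivation R A X) (h : ∀ β : B, d (algebraMap B A β) = 0) :
    Derivation B A X where
  toFun := d
  map_add' := d.map_add
  map_smul' β a := by
    rw [RingHom.id_apply, Algebra.smul_def, d.leibniz, h, smul_zero, add_zero, algebraMap_smul]
  map_one_eq_zero' := d.map_one_eq_zero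
  leibniz' := d.leibniz

end

namespace SecondaryHochschild

variable {k B A M : Type*} [CommRing k] [CommRing B] [CommRing A] [Algebra k A] [Algebra B A]
  [AddCommGroup M] [Module k M] [Module A M] [IsScalarTower k A M]

variable (k B A M) in
def kaehlerRelations : Submodule A (M ⊗[k] A) :=
  Submodule.span A <|
    Set.range (fun ((m, a, b) : M × A × A) =>
      (a • m) ⊗ₜ[k] b + (b • m) ⊗ₜ[k] a - m ⊗ₜ[k] (a * b)) ∪
    Set.range (fun ((m, β) : M × B) => m ⊗ₜ[k] algebraMap B A β)

section Presentation

variable {N : Submodule A (M ⊗[k] A)} (hN : kaehlerRelations k B A M ≤ N)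

local instance : Module B ((M ⊗[k] A) ⧸ N) := Module.compHom _ (algebraMap B A)

local instance : IsScalarTower B A ((M ⊗[k] A) ⧸ N) :=
  IsScalarTower.of_algebraMap_smul fun _ _ => rfl

local instance : SMulCommClass A B ((M ⊗[k] A) ⧸ N) :=
  ⟨fun a β x => smul_comm a (algebraMap B A β) x⟩

noncomputable def tensorClassDerivation : Derivation B A (M →ₗ[A] (M ⊗[k] A) ⧸ N) :=
  Derivation.extendScalars
    (Derivation.mk' ((LinearMap.llcomp A M _ _ N.mkQ).restrictScalars k ∘ₗ
      (AlgebraTensorModule.mk k A M A).flip) fun a b => LinearMap.ext fun m => by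
        simp only [LinearMap.coe_comp, LinearMap.coe_restrictScalars, Function.comp_apply,
          LinearMap.llcomp_apply, LinearMap.flip_apply, AlgebraTensorModule.mk_apply,
          LinearMap.coe_mk, AddHom.coe_mk, Submodule.mkQ_apply, LinearMap.add_apply,
          LinearMap.smul_apply]
        rw [← Submodule.Quotient.mk_smul, ← Submodule.Quotient.mk_smul,
          ← Submodule.Quotient.mk_add, smul_tmul', smul_tmul', eq_comm, Submodule.Quotient.eq]
        exact hN <| Submodule.subset_span <| Or.inl ⟨(m, a, b), rfl⟩)
    fun β => LinearMap.ext fun m => (Submodule.Quotient.mk_eq_zero N).2 <|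
      hN <| Submodule.subset_span <| Or.inr ⟨(m, β), rfl⟩

noncomputable def ofTensorKaehler : M ⊗[A] Ω[A⁄B] →ₗ[A] (M ⊗[k] A) ⧸ N :=
  TensorProduct.lift (tensorClassDerivation hN).liftKaehlerDifferential.flip

@[simp]
lemma ofTensorKaehler_tmul_D (m : M) (b : A) :
    ofTensorKaehler hN (m ⊗ₜ[A] KaehlerDifferential.D B A b) =
      Submodule.Quotient.mk (m ⊗ₜ[k] b) := by
  simp only [ofTensorKaehler, lift.tmul, LinearMap.flip_apply,
    Derivation.liftKaehlerDifferential_comp_D]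
  rfl

end Presentation

variable [Algebra k B]

/-- `p2` is the secondary Hochschild differential `∂₂` for an `A`-symmetric bimodule `M`, whose
right action is written as the left one. -/
def IsD₂ (p2 : M ⊗[k] A ⊗[k] A ⊗[k] B →ₗ[k] M ⊗[k] A) : Prop :=
  ∀ (m : M) (a b : A) (β : B), p2 (m ⊗ₜ[k] a ⊗ₜ[k] b ⊗ₜ[k] β) =
    ((a * algebraMap B A β) • m) ⊗ₜ[k] b - m ⊗ₜ[k] (a * algebraMap B A β * b)
      + ((b * algebraMap B A β) • m) ⊗ₜ[k] a

namespace IsD₂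

variable {p2 : M ⊗[k] A ⊗[k] A ⊗[k] B →ₗ[k] M ⊗[k] A}

lemma map_smul (hp2 : IsD₂ p2) (a : A) (y : M ⊗[k] A ⊗[k] A ⊗[k] B) :
    p2 (a • y) = a • p2 y := by
  have : p2 ∘ₗ DistribSMul.toLinearMap k _ a = DistribSMul.toLinearMap k _ a ∘ₗ p2 := by
    ext m a' b β
    simp only [AlgebraTensorModule.curry_apply, curry_apply, LinearMap.coe_restrictScalars,
      LinearMap.coe_comp, Function.comp_apply, DistribSMul.toLinearMap_apply]
    rw [smul_tmul', smul_tmul', smul_tmul', hp2, hp2]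
    simp only [smul_add, smul_sub, smul_tmul', smul_smul, mul_comm a]
  exact LinearMap.congr_fun this y

noncomputable def linearMap (hp2 : IsD₂ p2) : M ⊗[k] A ⊗[k] A ⊗[k] B →ₗ[A] M ⊗[k] A :=
  { p2 with map_smul' := hp2.map_smul }

lemma kaehlerRelations_le_range (hp2 : IsD₂ p2) :
    kaehlerRelations k B A M ≤ LinearMap.range hp2.linearMap := by
  refine Submodule.span_le.2 <| Set.union_subset ?_ ?_
  · rintro _ ⟨⟨m, a, b⟩, rfl⟩
    refine ⟨m ⊗ₜ a ⊗ₜ b ⊗ₜ 1, ?_⟩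
    change p2 _ = _
    rw [hp2]
    simp only [map_one, mul_one]
    abel
  · rintro _ ⟨⟨m, β⟩, rfl⟩
    -- `∂₂(x ⊗ 1 ⊗ 1 ⊗ 1) = x ⊗ 1`, and `∂₂(m ⊗ 1 ⊗ 1 ⊗ β) = 2 • ε(β)m ⊗ 1 - m ⊗ ε(β)`
    let w : M ⊗[k] A ⊗[k] A ⊗[k] B := (algebraMap B A β • m) ⊗ₜ 1 ⊗ₜ 1 ⊗ₜ 1
    refine ⟨w + w - m ⊗ₜ 1 ⊗ₜ 1 ⊗ₜ β, ?_⟩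
    change p2 _ = _
    rw [map_sub, map_add, hp2, hp2]
    simp only [map_one, mul_one, one_mul, one_smul]
    abel

end IsD₂

variable [IsScalarTower k B A]

variable (k B) in
noncomputable def toTensorKaehler : M ⊗[k] A →ₗ[A] M ⊗[A] Ω[A⁄B] :=
  AlgebraTensorModule.lift <| ((TensorProduct.mk A M Ω[A⁄B]).restrictScalars₁₂ A k).compl₂
    ((KaehlerDifferential.D B A).restrictScalars k).toLinearMap

@[simp]
lemma toTensorKaehler_tmul (m : M) (a : A) :
    toTensorKaehler k B (m ⊗ₜ[k] a) = m ⊗ₜ[A] KaehlerDifferential.D B A a :=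
  rfl

noncomputable def quotEquivTensorKaehler {N : Submodule A (M ⊗[k] A)}
    (hN : kaehlerRelations k B A M ≤ N) (le_ker : N ≤ LinearMap.ker (toTensorKaehler k B)) :
    ((M ⊗[k] A) ⧸ N) ≃ₗ[A] M ⊗[A] Ω[A⁄B] :=
  LinearEquiv.ofLinearMap (N.liftQ _ le_ker) (ofTensorKaehler hN)
    (TensorProduct.ext <| LinearMap.ext fun m =>
      LinearMap.ext_on_range (KaehlerDifferential.span_range_derivation B A) fun b => by simp)
    (Submodule.linearMap_qext _ <| AlgebraTensorModule.ext fun m b => by simp)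

lemma IsD₂.range_le_ker_toTensorKaehler {p2 : M ⊗[k] A ⊗[k] A ⊗[k] B →ₗ[k] M ⊗[k] A}
    (hp2 : IsD₂ p2) : LinearMap.range hp2.linearMap ≤ LinearMap.ker (toTensorKaehler k B) := by
  rintro _ ⟨y, rfl⟩
  have : (toTensorKaehler k B).restrictScalars k ∘ₗ p2 = 0 := by
    ext m a b β
    simp only [AlgebraTensorModule.curry_apply, curry_apply, LinearMap.coe_restrictScalars,
      LinearMap.coe_comp, Function.comp_apply, hp2 m a b β, map_add, map_sub,
      toTensorKaehler_tmul, LinearMap.zero_apply]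
    rw [Derivation.leibniz, Derivation.leibniz, Derivation.map_algebraMap, smul_zero, zero_add,
      smul_smul, tmul_add, ← smul_tmul, ← smul_tmul]
    abel
  exact LinearMap.congr_fun this y

end SecondaryHochschild

open SecondaryHochschild in
theorem secondaryHochschild_H1_iso_kaehler_general
    (k : Type*) [CommRing k]
    (B : Type*) [CommRing B] [Algebra k B]
    (A : Type*) [CommRing A] [Algebra k A] [Algebra B A] [IsScalarTower k B A]
    (M : Type*) [AddCommGroup M] [Module k M]
    [Module A M] [Module Aᵐᵒᵖ M] [IsCentralScalar A M]
    [IsScalarTower k A M]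
    -- the secondary Hochschild differentials ∂₁, ∂₂ of (A,B,ε) with coefficients in M
    (p1 : M ⊗[k] A →ₗ[k] M)
    (hp1 : ∀ (m : M) (a : A), p1 (m ⊗ₜ[k] a) = op a • m - a • m)
    (p2 : M ⊗[k] A ⊗[k] A ⊗[k] B →ₗ[k] M ⊗[k] A)
    (hp2 : ∀ (m : M) (a b : A) (α : B),
      p2 (m ⊗ₜ[k] a ⊗ₜ[k] b ⊗ₜ[k] α) =
        (op (a * algebraMap B A α) • m) ⊗ₜ[k] b
        - m ⊗ₜ[k] (a * algebraMap B A α * b)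
        + ((b * algebraMap B A α) • m) ⊗ₜ[k] a) :
    -- ∂₁ = 0, and H₁((A,B,ε);M) = (M⊗A)/im ∂₂ ≅ M ⊗[A] Ω¹_{A/B}
    p1 = 0 ∧
    ∃ e : ((M ⊗[k] A) ⧸ LinearMap.range p2) ≃ₗ[k] (M ⊗[A] Ω[A⁄B]),
      (∀ (m : M) (a : A),
        e (Submodule.Quotient.mk (m ⊗ₜ[k] a)) = m ⊗ₜ[A] (KaehlerDifferential.D B A a)) ∧
      (∀ (m : M) (a b : A),
        e.symm (m ⊗ₜ[A] (a • KaehlerDifferential.D B A b))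
          = Submodule.Quotient.mk ((a • m) ⊗ₜ[k] b)) := by
  have hp1_zero : p1 = 0 :=
    TensorProduct.ext' fun m a => by rw [hp1, op_smul_eq_smul, sub_self, LinearMap.zero_apply]
  have hd : IsD₂ p2 := fun m a b β => by rw [hp2, op_smul_eq_smul]
  let e : ((M ⊗[k] A) ⧸ LinearMap.range p2) ≃ₗ[k] (M ⊗[A] Ω[A⁄B]) :=
    (Submodule.quotEquivOfEq _ _ (LinearMap.range_restrictScalars (R := k) hd.linearMap)).trans <|
      (Submodule.Quotient.restrictScalarsEquiv k _).trans <|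
        (quotEquivTensorKaehler hd.kaehlerRelations_le_range
          hd.range_le_ker_toTensorKaehler).restrictScalars k
  have he (x : M ⊗[k] A) : e (Submodule.Quotient.mk x) = toTensorKaehler k B x := rfl
  exact ⟨hp1_zero, e, fun m a => he _,
    fun m a b => e.symm_apply_eq.2 ((he _).trans (smul_tmul a m _)).symm⟩

theorem secondaryHochschild_H1_iso_kaehler
    (k : Type*) [CommRing k]
    (B : Type*) [CommRing B] [Algebra k B]
    (A : Type*) [CommRing A] [Algebra k A] [Algebra B A] [IsScalarTower k B A]
    (M : Type*) [AddCommGroup M] [Module k M]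
    [Module A M] [Module Aᵐᵒᵖ M] [IsCentralScalar A M]
    [IsScalarTower k A M] [SMulCommClass A k M]
    -- the secondary Hochschild differentials ∂₁, ∂₂ of (A,B,ε) with coefficients in M
    (p1 : M ⊗[k] A →ₗ[k] M)
    (hp1 : ∀ (m : M) (a : A), p1 (m ⊗ₜ[k] a) = op a • m - a • m)
    (p2 : M ⊗[k] A ⊗[k] A ⊗[k] B →ₗ[k] M ⊗[k] A)
    (hp2 : ∀ (m : M) (a b : A) (α : B),
      p2 (m ⊗ₜ[k] a ⊗ₜ[k] b ⊗ₜ[k] α) =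
        (op (a * algebraMap B A α) • m) ⊗ₜ[k] b
        - m ⊗ₜ[k] (a * algebraMap B A α * b)
        + ((b * algebraMap B A α) • m) ⊗ₜ[k] a) :
    -- ∂₁ = 0, and H₁((A,B,ε);M) = (M⊗A)/im ∂₂ ≅ M ⊗[A] Ω¹_{A/B}
    p1 = 0 ∧
    ∃ e : ((M ⊗[k] A) ⧸ LinearMap.range p2) ≃ₗ[k] (M ⊗[A] Ω[A⁄B]),
      (∀ (m : M) (a : A),
        e (Submodule.Quotient.mk (m ⊗ₜ[k] a)) = m ⊗ₜ[A] (KaehlerDifferential.D B A a)) ∧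
      (∀ (m : M) (a b : A),
        e.symm (m ⊗ₜ[A] (a • KaehlerDifferential.D B A b))
          = Submodule.Quotient.mk ((a • m) ⊗ₜ[k] b)) :=
  secondaryHochschild_H1_iso_kaehler_general k B A M p1 hp1 p2 hp2
end

section
/- Suppose A is commutative. Then there is a k-module isomorphism H₁((A,B,ε);A) ≅ Ω¹_{A/B}, where A is regarded as a B-algebra via ε; the isomorphism sends the class of x⊗a to x·d(a). -/
/-!
Since `A` is commutative, `∂₁` vanishes. Write `d a` for the class of `1 ⊗ a` in
`H₁ = (A ⊗ A) / im ∂₂`; the image of `∂₂` is stable under multiplication on the left factor, so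
`H₁` is an `A`-module in which the class of `x ⊗ a` is `x • d a`. The relation
`∂₂(1 ⊗ a ⊗ b ⊗ α) ≡ 0` reads `d (a ε(α) b) = a ε(α) • d b + b ε(α) • d a`, which for `α = 1` is the
Leibniz rule and for `a = b = 1` gives `d (ε α) = 0`: so `d` is a `B`-derivation whose image spans
`H₁`. Conversely `x ⊗ a ↦ x • D a` kills `im ∂₂` because `D` is a `B`-derivation, and the universal
property of `Ω[A⁄B]` makes the two maps mutually inverse.
-/

open TensorProduct

noncomputable section

namespace Derivation

variable {R S M : Type*} [CommRing R] [CommRing S] [Algebra R S] [AddCommGroup M] [Module R M]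
  [Module S M] [IsScalarTower R S M]

def equivKaehlerDifferential (d : Derivation R S M)
    (hd : Submodule.span S (Set.range d) = ⊤) (f : M →ₗ[S] Ω[S⁄R])
    (hf : ∀ a, f (d a) = KaehlerDifferential.D R S a) : M ≃ₗ[S] Ω[S⁄R] :=
  LinearEquiv.ofLinearMap f d.liftKaehlerDifferential (by ext a; simp [hf])
    (LinearMap.ext_on_range hd fun a => by simp [hf])

end Derivation

namespace SecondaryHochschild

variable {k B A : Type*} [CommRing k] [CommRing B] [Algebra k B] [CommRing A] [Algebra k A]
  [Algebra B A]

/-- `p` is the differential `∂₂` of the triple `(A, B, ε)` with `ε = algebraMap B A`. -/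
def IsSecondaryDifferential (p : A ⊗[k] A ⊗[k] A ⊗[k] B →ₗ[k] A ⊗[k] A) : Prop :=
  ∀ (x a b : A) (α : B), p (x ⊗ₜ a ⊗ₜ b ⊗ₜ α) =
    (x * a * algebraMap B A α) ⊗ₜ b - x ⊗ₜ (a * algebraMap B A α * b)
      + (b * algebraMap B A α * x) ⊗ₜ a

namespace IsSecondaryDifferential

variable {p : A ⊗[k] A ⊗[k] A ⊗[k] B →ₗ[k] A ⊗[k] A}

theorem comp_rTensor_mulLeft (hp : IsSecondaryDifferential p) (c : A) :
    p ∘ₗ ((LinearMap.mulLeft k c).rTensor A |>.rTensor A |>.rTensor B) = c • p := by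
  ext x a b α
  simp only [AlgebraTensorModule.curry_apply, curry_apply,
    LinearMap.coe_restrictScalars, LinearMap.coe_comp, Function.comp_apply,
    LinearMap.rTensor_tmul, LinearMap.mulLeft_apply, LinearMap.smul_apply]
  rw [hp, hp, smul_add, smul_sub, smul_tmul', smul_tmul', smul_tmul', smul_eq_mul, smul_eq_mul,
    smul_eq_mul]
  ring_nf

theorem smul_mem_range (hp : IsSecondaryDifferential p) (c : A) {y : A ⊗[k] A}
    (hy : y ∈ LinearMap.range p) : c • y ∈ LinearMap.range p := by
  obtain ⟨t, rfl⟩ := hy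
  exact ⟨_, LinearMap.congr_fun (hp.comp_rTensor_mulLeft c) t⟩

def boundaries (hp : IsSecondaryDifferential p) : Submodule A (A ⊗[k] A) :=
  { LinearMap.range p with smul_mem' := fun c _ hy => hp.smul_mem_range c hy }

theorem mk_tmul (hp : IsSecondaryDifferential p) (x a : A) :
    (Submodule.Quotient.mk (x ⊗ₜ[k] a) : A ⊗[k] A ⧸ hp.boundaries) =
      x • Submodule.Quotient.mk (1 ⊗ₜ a) := by
  rw [← Submodule.Quotient.mk_smul, smul_tmul', smul_eq_mul, mul_one]

theorem mk_one_tmul_mul (hp : IsSecondaryDifferential p) (a b : A) (α : B) :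
    (Submodule.Quotient.mk ((1 : A) ⊗ₜ[k] (a * algebraMap B A α * b)) :
        A ⊗[k] A ⧸ hp.boundaries) =
      (a * algebraMap B A α) • Submodule.Quotient.mk (1 ⊗ₜ b) +
        (b * algebraMap B A α) • Submodule.Quotient.mk (1 ⊗ₜ a) := by
  have hmem : p (1 ⊗ₜ a ⊗ₜ b ⊗ₜ α) ∈ hp.boundaries := LinearMap.mem_range_self p _
  rw [hp, ← Submodule.Quotient.mk_eq_zero, Submodule.Quotient.mk_add,
    Submodule.Quotient.mk_sub, hp.mk_tmul (1 * a * _) b, hp.mk_tmul (b * _ * 1) a, one_mul,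
    mul_one] at hmem
  rw [eq_comm, ← sub_eq_zero, ← hmem]
  abel

theorem mk_one_tmul_one (hp : IsSecondaryDifferential p) :
    (Submodule.Quotient.mk ((1 : A) ⊗ₜ[k] (1 : A)) : A ⊗[k] A ⧸ hp.boundaries) = 0 := by
  simpa using hp.mk_one_tmul_mul 1 1 1

def derivation (hp : IsSecondaryDifferential p) :
    Derivation B A (A ⊗[k] A ⧸ hp.boundaries) where
  toFun a := Submodule.Quotient.mk (1 ⊗ₜ a)
  map_add' a b := by rw [tmul_add, Submodule.Quotient.mk_add]
  map_smul' β a := by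
    simpa [hp.mk_one_tmul_one, Algebra.smul_def, algebraMap_smul] using hp.mk_one_tmul_mul 1 a β
  map_one_eq_zero' := hp.mk_one_tmul_one
  leibniz' a b := by simpa [add_comm] using hp.mk_one_tmul_mul a b 1

theorem span_range_derivation (hp : IsSecondaryDifferential p) :
    Submodule.span A (Set.range hp.derivation) = ⊤ := by
  refine Submodule.eq_top_iff'.2 fun y => Submodule.Quotient.induction_on _ y fun t => ?_
  induction t using TensorProduct.induction_on with
  | zero => exact Submodule.zero_mem _
  | tmul x a =>
    rw [hp.mk_tmul]
    exact Submodule.smul_mem _ x (Submodule.subset_span ⟨a, rfl⟩)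
  | add t t' ht ht' =>
    rw [Submodule.Quotient.mk_add]
    exact Submodule.add_mem _ ht ht'

variable [IsScalarTower k B A]

theorem tensorProductTo_comp_eq_zero (hp : IsSecondaryDifferential p)
    {M : Type*} [AddCommGroup M] [Module A M] [Module B M] [Module k M] [IsScalarTower k A M]
    [IsScalarTower k B M] (D : Derivation B A M) :
    (D.restrictScalars k).tensorProductTo.restrictScalars k ∘ₗ p = 0 := by
  ext x a b α
  simp only [AlgebraTensorModule.curry_apply, curry_apply,
    LinearMap.coe_restrictScalars, LinearMap.coe_comp, Function.comp_apply, LinearMap.zero_apply]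
  rw [hp, map_add, map_sub]
  simp only [Derivation.tensorProductTo_tmul, Derivation.coe_restrictScalars]
  rw [mul_right_comm a, Derivation.leibniz, Derivation.leibniz, D.map_algebraMap]
  module

def toKaehler (hp : IsSecondaryDifferential p) : A ⊗[k] A ⧸ hp.boundaries →ₗ[A] Ω[A⁄B] :=
  hp.boundaries.liftQ ((KaehlerDifferential.D B A).restrictScalars k).tensorProductTo <| by
    rintro _ ⟨t, rfl⟩
    exact LinearMap.congr_fun (hp.tensorProductTo_comp_eq_zero (KaehlerDifferential.D B A)) t

theorem toKaehler_mk (hp : IsSecondaryDifferential p) (x a : A) :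
    hp.toKaehler (Submodule.Quotient.mk (x ⊗ₜ a)) = x • KaehlerDifferential.D B A a :=
  rfl

def homologyEquivKaehler (hp : IsSecondaryDifferential p) :
    (A ⊗[k] A ⧸ LinearMap.range p) ≃ₗ[k] Ω[A⁄B] :=
  Submodule.Quotient.restrictScalarsEquiv k hp.boundaries ≪≫ₗ
    (hp.derivation.equivKaehlerDifferential hp.span_range_derivation hp.toKaehler
      fun a => (hp.toKaehler_mk 1 a).trans (one_smul A _)).restrictScalars k

theorem homologyEquivKaehler_mk (hp : IsSecondaryDifferential p) (x a : A) :
    hp.homologyEquivKaehler (Submodule.Quotient.mk (x ⊗ₜ a)) =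
      x • KaehlerDifferential.D B A a :=
  hp.toKaehler_mk x a

end IsSecondaryDifferential

end SecondaryHochschild

end

theorem secondaryHochschild_H1_self_iso_kaehler
    (k : Type*) [CommRing k]
    (B : Type*) [CommRing B] [Algebra k B]
    (A : Type*) [CommRing A] [Algebra k A] [Algebra B A] [IsScalarTower k B A]
    -- the secondary Hochschild differentials ∂₁, ∂₂ of (A,B,ε) with coefficients in A
    (p1 : A ⊗[k] A →ₗ[k] A)
    (hp1 : ∀ (x a : A), p1 (x ⊗ₜ[k] a) = x * a - a * x)
    (p2 : A ⊗[k] A ⊗[k] A ⊗[k] B →ₗ[k] A ⊗[k] A)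
    (hp2 : ∀ (x a b : A) (α : B),
      p2 (x ⊗ₜ[k] a ⊗ₜ[k] b ⊗ₜ[k] α) =
        (x * a * algebraMap B A α) ⊗ₜ[k] b
        - x ⊗ₜ[k] (a * algebraMap B A α * b)
        + (b * algebraMap B A α * x) ⊗ₜ[k] a) :
    p1 = 0 ∧
    ∃ e : ((A ⊗[k] A) ⧸ LinearMap.range p2) ≃ₗ[k] Ω[A⁄B],
      ∀ (x a : A),
        e (Submodule.Quotient.mk (x ⊗ₜ[k] a)) = x • KaehlerDifferential.D B A a := by
  have hp : SecondaryHochschild.IsSecondaryDifferential p2 := hp2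
  exact ⟨TensorProduct.ext' fun x a => by rw [hp1, mul_comm, sub_self, LinearMap.zero_apply],
    hp.homologyEquivKaehler, hp.homologyEquivKaehler_mk⟩
end

section
/- The k-linear map M⊗A⊗A → C₂ = M⊗A⊗A⊗B given by m⊗a⊗b ↦ m⊗a⊗b⊗1_B maps ker d₂ into ker ∂₂ and maps im d₃ into im ∂₃. Consequently it induces a well-defined k-linear map Φ² : H₂(A,M) → H₂((A,B,ε);M). -/
/-!
At the unit `1 ∈ B` (and `1 ⊗ 1 ⊗ 1 ∈ B ⊗ B ⊗ B`) the secondary differentials are the Hochschild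
ones, because `ε 1 = 1`. So `m ⊗ a ⊗ b ↦ m ⊗ a ⊗ b ⊗ 1` and `m ⊗ a ⊗ b ⊗ c ↦ m ⊗ a ⊗ b ⊗ c ⊗ 1 ⊗ 1 ⊗ 1`
form a chain map in degrees 1 ≤ n ≤ 3 (the identity in degree 1), and any chain map induces a
map on homology.
-/

open TensorProduct MulOpposite

set_option maxSynthPendingDepth 8

section ChainMap

variable {R : Type*} [CommRing R]
  {C₁ C₂ C₃ D₁ D₂ D₃ : Type*} [AddCommGroup C₁] [AddCommGroup C₂] [AddCommGroup C₃]
  [AddCommGroup D₁] [AddCommGroup D₂] [AddCommGroup D₃] [Module R C₁] [Module R C₂] [Module R C₃]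
  [Module R D₁] [Module R D₂] [Module R D₃]

theorem LinearMap.ker_le_comap_ker_of_comp_eq {d : C₂ →ₗ[R] C₁} {δ : D₂ →ₗ[R] D₁}
    {f₁ : C₁ →ₗ[R] D₁} {f₂ : C₂ →ₗ[R] D₂} (h : δ ∘ₗ f₂ = f₁ ∘ₗ d) :
    LinearMap.ker d ≤ (LinearMap.ker δ).comap f₂ := by
  rw [← LinearMap.ker_comp, h]
  exact LinearMap.ker_le_ker_comp d f₁

theorem LinearMap.map_range_le_range_of_comp_eq {d : C₃ →ₗ[R] C₂} {δ : D₃ →ₗ[R] D₂}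
    {f₂ : C₂ →ₗ[R] D₂} {f₃ : C₃ →ₗ[R] D₃} (h : f₂ ∘ₗ d = δ ∘ₗ f₃) :
    (LinearMap.range d).map f₂ ≤ LinearMap.range δ := by
  rw [← LinearMap.range_comp, h]
  exact LinearMap.range_comp_le_range f₃ δ

end ChainMap

section SecondaryHochschild

variable {k : Type*} [CommRing k] {A : Type*} [Ring A] [Algebra k A]
  {B : Type*} [CommRing B] [Algebra k B] {ε : B →ₐ[k] A}
  {M : Type*} [AddCommGroup M] [Module k M] [Module A M] [Module Aᵐᵒᵖ M]

theorem secondaryDiff₂_comp_eq_hochschildDiff₂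
    {d2 : M ⊗[k] A ⊗[k] A →ₗ[k] M ⊗[k] A}
    (hd2 : ∀ (m : M) (a b : A),
      d2 (m ⊗ₜ[k] a ⊗ₜ[k] b) =
        (op a • m) ⊗ₜ[k] b - m ⊗ₜ[k] (a * b) + (b • m) ⊗ₜ[k] a)
    {p2 : M ⊗[k] A ⊗[k] A ⊗[k] B →ₗ[k] M ⊗[k] A}
    (hp2 : ∀ (m : M) (a b : A) (α : B),
      p2 (m ⊗ₜ[k] a ⊗ₜ[k] b ⊗ₜ[k] α) =
        (op (a * ε α) • m) ⊗ₜ[k] b - m ⊗ₜ[k] (a * ε α * b) + ((b * ε α) • m) ⊗ₜ[k] a)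
    {ι : M ⊗[k] A ⊗[k] A →ₗ[k] M ⊗[k] A ⊗[k] A ⊗[k] B}
    (hι : ∀ (m : M) (a b : A), ι (m ⊗ₜ[k] a ⊗ₜ[k] b) = m ⊗ₜ[k] a ⊗ₜ[k] b ⊗ₜ[k] (1 : B)) :
    p2 ∘ₗ ι = d2 := by
  ext m a b
  simp [hι, hp2, hd2]

theorem comp_hochschildDiff₃_eq_secondaryDiff₃_comp
    {d3 : M ⊗[k] A ⊗[k] A ⊗[k] A →ₗ[k] M ⊗[k] A ⊗[k] A}
    (hd3 : ∀ (m : M) (a b c : A),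
      d3 (m ⊗ₜ[k] a ⊗ₜ[k] b ⊗ₜ[k] c) =
        (op a • m) ⊗ₜ[k] b ⊗ₜ[k] c - m ⊗ₜ[k] (a * b) ⊗ₜ[k] c
        + m ⊗ₜ[k] a ⊗ₜ[k] (b * c) - (c • m) ⊗ₜ[k] a ⊗ₜ[k] b)
    {p3 : M ⊗[k] A ⊗[k] A ⊗[k] A ⊗[k] B ⊗[k] B ⊗[k] B →ₗ[k] M ⊗[k] A ⊗[k] A ⊗[k] B}
    (hp3 : ∀ (m : M) (a b c : A) (α β γ : B),
      p3 (m ⊗ₜ[k] a ⊗ₜ[k] b ⊗ₜ[k] c ⊗ₜ[k] α ⊗ₜ[k] β ⊗ₜ[k] γ) =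
        (op (a * ε (α * β)) • m) ⊗ₜ[k] b ⊗ₜ[k] c ⊗ₜ[k] γ
        - m ⊗ₜ[k] (a * ε α * b) ⊗ₜ[k] c ⊗ₜ[k] (β * γ)
        + m ⊗ₜ[k] a ⊗ₜ[k] (b * ε γ * c) ⊗ₜ[k] (α * β)
        - ((c * ε (β * γ)) • m) ⊗ₜ[k] a ⊗ₜ[k] b ⊗ₜ[k] α)
    {ι : M ⊗[k] A ⊗[k] A →ₗ[k] M ⊗[k] A ⊗[k] A ⊗[k] B}
    (hι : ∀ (m : M) (a b : A), ι (m ⊗ₜ[k] a ⊗ₜ[k] b) = m ⊗ₜ[k] a ⊗ₜ[k] b ⊗ₜ[k] (1 : B)) :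
    ι ∘ₗ d3 = p3 ∘ₗ (TensorProduct.mk k _ B).flip 1 ∘ₗ (TensorProduct.mk k _ B).flip 1 ∘ₗ
      (TensorProduct.mk k (M ⊗[k] A ⊗[k] A ⊗[k] A) B).flip 1 := by
  ext m a b c
  simp [hι, hp3, hd3]

end SecondaryHochschild

theorem secondaryHochschild_Phi2_wellDefined_general
    (k : Type*) [CommRing k]
    (A : Type*) [Ring A] [Algebra k A]
    (B : Type*) [CommRing B] [Algebra k B]
    (ε : B →ₐ[k] A)
    (M : Type*) [AddCommGroup M] [Module k M]
    [Module A M] [Module Aᵐᵒᵖ M]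
    -- the usual Hochschild differentials d₂, d₃
    (d2 : M ⊗[k] A ⊗[k] A →ₗ[k] M ⊗[k] A)
    (hd2 : ∀ (m : M) (a b : A),
      d2 (m ⊗ₜ[k] a ⊗ₜ[k] b) =
        (op a • m) ⊗ₜ[k] b - m ⊗ₜ[k] (a * b) + (b • m) ⊗ₜ[k] a)
    (d3 : M ⊗[k] A ⊗[k] A ⊗[k] A →ₗ[k] M ⊗[k] A ⊗[k] A)
    (hd3 : ∀ (m : M) (a b c : A),
      d3 (m ⊗ₜ[k] a ⊗ₜ[k] b ⊗ₜ[k] c) =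
        (op a • m) ⊗ₜ[k] b ⊗ₜ[k] c - m ⊗ₜ[k] (a * b) ⊗ₜ[k] c
        + m ⊗ₜ[k] a ⊗ₜ[k] (b * c) - (c • m) ⊗ₜ[k] a ⊗ₜ[k] b)
    -- the secondary Hochschild differentials δ₂, δ₃
    (p2 : M ⊗[k] A ⊗[k] A ⊗[k] B →ₗ[k] M ⊗[k] A)
    (hp2 : ∀ (m : M) (a b : A) (α : B),
      p2 (m ⊗ₜ[k] a ⊗ₜ[k] b ⊗ₜ[k] α) =
        (op (a * ε α) • m) ⊗ₜ[k] b - m ⊗ₜ[k] (a * ε α * b) + ((b * ε α) • m) ⊗ₜ[k] a)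
    (p3 : M ⊗[k] A ⊗[k] A ⊗[k] A ⊗[k] B ⊗[k] B ⊗[k] B →ₗ[k] M ⊗[k] A ⊗[k] A ⊗[k] B)
    (hp3 : ∀ (m : M) (a b c : A) (α β γ : B),
      p3 (m ⊗ₜ[k] a ⊗ₜ[k] b ⊗ₜ[k] c ⊗ₜ[k] α ⊗ₜ[k] β ⊗ₜ[k] γ) =
        (op (a * ε (α * β)) • m) ⊗ₜ[k] b ⊗ₜ[k] c ⊗ₜ[k] γ
        - m ⊗ₜ[k] (a * ε α * b) ⊗ₜ[k] c ⊗ₜ[k] (β * γ)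
        + m ⊗ₜ[k] a ⊗ₜ[k] (b * ε γ * c) ⊗ₜ[k] (α * β)
        - ((c * ε (β * γ)) • m) ⊗ₜ[k] a ⊗ₜ[k] b ⊗ₜ[k] α)
    -- the chain-level map m⊗a⊗b ↦ m⊗a⊗b⊗1_B
    (ι : M ⊗[k] A ⊗[k] A →ₗ[k] M ⊗[k] A ⊗[k] A ⊗[k] B)
    (hι : ∀ (m : M) (a b : A),
      ι (m ⊗ₜ[k] a ⊗ₜ[k] b) = m ⊗ₜ[k] a ⊗ₜ[k] b ⊗ₜ[k] (1 : B)) :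
    (∀ x ∈ LinearMap.ker d2, ι x ∈ LinearMap.ker p2) ∧
    (∀ x ∈ LinearMap.range d3, ι x ∈ LinearMap.range p3) ∧
    ∃ Phi2 : (↥(LinearMap.ker d2) ⧸ (LinearMap.range d3).comap (LinearMap.ker d2).subtype)
        →ₗ[k] (↥(LinearMap.ker p2) ⧸ (LinearMap.range p3).comap (LinearMap.ker p2).subtype),
      ∀ (x : M ⊗[k] A ⊗[k] A) (hx : x ∈ LinearMap.ker d2) (hx' : ι x ∈ LinearMap.ker p2),
        Phi2 (Submodule.Quotient.mk ⟨x, hx⟩) = Submodule.Quotient.mk ⟨ι x, hx'⟩ := by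
  have hker : ∀ x ∈ LinearMap.ker d2, ι x ∈ LinearMap.ker p2 :=
    LinearMap.ker_le_comap_ker_of_comp_eq (f₁ := LinearMap.id)
      (secondaryDiff₂_comp_eq_hochschildDiff₂ hd2 hp2 hι)
  have hrange : ∀ x ∈ LinearMap.range d3, ι x ∈ LinearMap.range p3 := fun x hx =>
    LinearMap.map_range_le_range_of_comp_eq
      (comp_hochschildDiff₃_eq_secondaryDiff₃_comp hd3 hp3 hι) (Submodule.mem_map_of_mem hx)
  exact ⟨hker, hrange, Submodule.mapQ _ _ (ι.restrict hker) (fun x hx => hrange x hx),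
    fun _ _ _ => rfl⟩

theorem secondaryHochschild_Phi2_wellDefined
    (k : Type*) [CommRing k]
    (A : Type*) [Ring A] [Algebra k A]
    (B : Type*) [CommRing B] [Algebra k B]
    (ε : B →ₐ[k] A) (hcen : ∀ (b : B) (a : A), ε b * a = a * ε b)
    (M : Type*) [AddCommGroup M] [Module k M]
    [Module A M] [Module Aᵐᵒᵖ M] [SMulCommClass A Aᵐᵒᵖ M]
    [IsScalarTower k A M] [IsScalarTower k Aᵐᵒᵖ M]
    (hsymm : ∀ (b : B) (m : M), ε b • m = op (ε b) • m)
    -- the usual Hochschild differentials d₂, d₃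
    (d2 : M ⊗[k] A ⊗[k] A →ₗ[k] M ⊗[k] A)
    (hd2 : ∀ (m : M) (a b : A),
      d2 (m ⊗ₜ[k] a ⊗ₜ[k] b) =
        (op a • m) ⊗ₜ[k] b - m ⊗ₜ[k] (a * b) + (b • m) ⊗ₜ[k] a)
    (d3 : M ⊗[k] A ⊗[k] A ⊗[k] A →ₗ[k] M ⊗[k] A ⊗[k] A)
    (hd3 : ∀ (m : M) (a b c : A),
      d3 (m ⊗ₜ[k] a ⊗ₜ[k] b ⊗ₜ[k] c) =
        (op a • m) ⊗ₜ[k] b ⊗ₜ[k] c - m ⊗ₜ[k] (a * b) ⊗ₜ[k] c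
        + m ⊗ₜ[k] a ⊗ₜ[k] (b * c) - (c • m) ⊗ₜ[k] a ⊗ₜ[k] b)
    -- the secondary Hochschild differentials ∂₂, ∂₃
    (p2 : M ⊗[k] A ⊗[k] A ⊗[k] B →ₗ[k] M ⊗[k] A)
    (hp2 : ∀ (m : M) (a b : A) (α : B),
      p2 (m ⊗ₜ[k] a ⊗ₜ[k] b ⊗ₜ[k] α) =
        (op (a * ε α) • m) ⊗ₜ[k] b - m ⊗ₜ[k] (a * ε α * b) + ((b * ε α) • m) ⊗ₜ[k] a)
    (p3 : M ⊗[k] A ⊗[k] A ⊗[k] A ⊗[k] B ⊗[k] B ⊗[k] B →ₗ[k] M ⊗[k] A ⊗[k] A ⊗[k] B)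
    (hp3 : ∀ (m : M) (a b c : A) (α β γ : B),
      p3 (m ⊗ₜ[k] a ⊗ₜ[k] b ⊗ₜ[k] c ⊗ₜ[k] α ⊗ₜ[k] β ⊗ₜ[k] γ) =
        (op (a * ε (α * β)) • m) ⊗ₜ[k] b ⊗ₜ[k] c ⊗ₜ[k] γ
        - m ⊗ₜ[k] (a * ε α * b) ⊗ₜ[k] c ⊗ₜ[k] (β * γ)
        + m ⊗ₜ[k] a ⊗ₜ[k] (b * ε γ * c) ⊗ₜ[k] (α * β)
        - ((c * ε (β * γ)) • m) ⊗ₜ[k] a ⊗ₜ[k] b ⊗ₜ[k] α)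
    -- the chain-level map m⊗a⊗b ↦ m⊗a⊗b⊗1_B
    (ι : M ⊗[k] A ⊗[k] A →ₗ[k] M ⊗[k] A ⊗[k] A ⊗[k] B)
    (hι : ∀ (m : M) (a b : A),
      ι (m ⊗ₜ[k] a ⊗ₜ[k] b) = m ⊗ₜ[k] a ⊗ₜ[k] b ⊗ₜ[k] (1 : B)) :
    (∀ x ∈ LinearMap.ker d2, ι x ∈ LinearMap.ker p2) ∧
    (∀ x ∈ LinearMap.range d3, ι x ∈ LinearMap.range p3) ∧
    ∃ Phi2 : (↥(LinearMap.ker d2) ⧸ (LinearMap.range d3).comap (LinearMap.ker d2).subtype)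
        →ₗ[k] (↥(LinearMap.ker p2) ⧸ (LinearMap.range p3).comap (LinearMap.ker p2).subtype),
      ∀ (x : M ⊗[k] A ⊗[k] A) (hx : x ∈ LinearMap.ker d2) (hx' : ι x ∈ LinearMap.ker p2),
        Phi2 (Submodule.Quotient.mk ⟨x, hx⟩) = Submodule.Quotient.mk ⟨ι x, hx'⟩ :=
  secondaryHochschild_Phi2_wellDefined_general k A B ε M d2 hd2 d3 hd3 p2 hp2 p3 hp3 ι hι
end

section
/- The sequence H₂(A,M) → H₂((A,B,ε);M) → H₁(B,M) is exact at H₂((A,B,ε);M): the kernel of Ψ equals the image of Φ². -/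
/-!
Write `S = im ∂₃ + ι(C₂(A,M))` inside `C₂ = M⊗A⊗A⊗B`, where `ι(m⊗a⊗b) = m⊗a⊗b⊗1`.
Two explicit boundaries show that every chain `m⊗a⊗b⊗α` is congruent modulo `S` to
`σ(ψ(m⊗a⊗b⊗α)) = bma⊗1⊗1⊗α`, with `σ(n⊗α) = n⊗1⊗1⊗α`, and that `σ` carries the boundaries of
`d₂^B` into `S`. Hence a secondary cycle `x` with `Ψ[x] = 0` lies in `S`: it is the image of
a Hochschild chain up to a boundary, and that chain is a cycle because `∂₂ ∘ ∂₃ = 0` and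
`∂₂ ∘ ι = d₂`.
-/

open TensorProduct MulOpposite

set_option maxSynthPendingDepth 8

section TensorRange

variable {k : Type*} [CommRing k] {M N P Q V : Type*}
  [AddCommGroup M] [Module k M] [AddCommGroup N] [Module k N]
  [AddCommGroup P] [Module k P] [AddCommGroup Q] [Module k Q] [AddCommGroup V] [Module k V]

theorem TensorProduct.range_le_of_tmul_mem₃ {f : M ⊗[k] N ⊗[k] P →ₗ[k] V} {S : Submodule k V}
    (h : ∀ m n p, f (m ⊗ₜ n ⊗ₜ p) ∈ S) : LinearMap.range f ≤ S := by
  rw [← S.ker_mkQ, LinearMap.range_le_ker_iff]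
  ext m n p
  simpa using h m n p

theorem TensorProduct.range_le_of_tmul_mem₄ {f : M ⊗[k] N ⊗[k] P ⊗[k] Q →ₗ[k] V} {S : Submodule k V}
    (h : ∀ m n p q, f (m ⊗ₜ n ⊗ₜ p ⊗ₜ q) ∈ S) : LinearMap.range f ≤ S := by
  rw [← S.ker_mkQ, LinearMap.range_le_ker_iff]
  ext m n p q
  simpa using h m n p q

end TensorRange

section ChainLevel

variable {k : Type*} [CommRing k] {X₁ X₂ X₃ C₂ C₃ Y₁ Y₂ : Type*}
  [AddCommGroup X₁] [Module k X₁] [AddCommGroup X₂] [Module k X₂]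
  [AddCommGroup X₃] [Module k X₃] [AddCommGroup C₂] [Module k C₂]
  [AddCommGroup C₃] [Module k C₃] [AddCommGroup Y₁] [Module k Y₁]
  [AddCommGroup Y₂] [Module k Y₂]

theorem Submodule.comap_range_le_of_section_mod {ψ : C₂ →ₗ[k] Y₁} {σ : Y₁ →ₗ[k] C₂}
    {δ : Y₂ →ₗ[k] Y₁} {S : Submodule k C₂}
    (hσψ : LinearMap.range (LinearMap.id - σ ∘ₗ ψ) ≤ S) (hσδ : LinearMap.range (σ ∘ₗ δ) ≤ S) :
    (LinearMap.range δ).comap ψ ≤ S := by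
  rintro x ⟨u, hu⟩
  simpa [hu] using S.add_mem (hσψ ⟨x, rfl⟩) (hσδ ⟨u, rfl⟩)

theorem ker_eq_range_of_comap_range_le_sup
    (d2 : X₂ →ₗ[k] X₁) (d3 : X₃ →ₗ[k] X₂) (p2 : C₂ →ₗ[k] X₁) (p3 : C₃ →ₗ[k] C₂)
    (δ : Y₂ →ₗ[k] Y₁) (ι : X₂ →ₗ[k] C₂) (ψ : C₂ →ₗ[k] Y₁)
    (hp : p2 ∘ₗ p3 = 0) (hι : p2 ∘ₗ ι = d2)
    (hψι : LinearMap.range (ψ ∘ₗ ι) ≤ LinearMap.range δ)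
    (hexact : (LinearMap.range δ).comap ψ ≤ LinearMap.range p3 ⊔ LinearMap.range ι)
    (Phi : (↥(LinearMap.ker d2) ⧸ (LinearMap.range d3).comap (LinearMap.ker d2).subtype)
        →ₗ[k] (↥(LinearMap.ker p2) ⧸ (LinearMap.range p3).comap (LinearMap.ker p2).subtype))
    (hPhi : ∀ (x : X₂) (hx : x ∈ LinearMap.ker d2) (hx' : ι x ∈ LinearMap.ker p2),
      Phi (Submodule.Quotient.mk ⟨x, hx⟩) = Submodule.Quotient.mk ⟨ι x, hx'⟩)
    (Psi : (↥(LinearMap.ker p2) ⧸ (LinearMap.range p3).comap (LinearMap.ker p2).subtype)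
        →ₗ[k] (Y₁ ⧸ LinearMap.range δ))
    (hPsi : ∀ (x : C₂) (hx : x ∈ LinearMap.ker p2),
      Psi (Submodule.Quotient.mk ⟨x, hx⟩) = Submodule.Quotient.mk (ψ x)) :
    LinearMap.ker Psi = LinearMap.range Phi := by
  have hιker : ∀ y ∈ LinearMap.ker d2, ι y ∈ LinearMap.ker p2 := fun y hy => by
    simpa [← hι] using hy
  apply le_antisymm
  · rintro q hq
    obtain ⟨⟨x, hx⟩, rfl⟩ := Submodule.Quotient.mk_surjective _ q
    rw [LinearMap.mem_ker, hPsi, Submodule.Quotient.mk_eq_zero] at hq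
    obtain ⟨_, ⟨w, rfl⟩, _, ⟨y, rfl⟩, hxy⟩ := Submodule.mem_sup.1 (hexact hq)
    have hy : y ∈ LinearMap.ker d2 := by
      rw [LinearMap.mem_ker, ← hι, LinearMap.comp_apply, eq_sub_of_add_eq' hxy, map_sub, hx,
        ← LinearMap.comp_apply, hp, LinearMap.zero_apply, sub_zero]
    refine ⟨Submodule.Quotient.mk ⟨y, hy⟩, ?_⟩
    rw [hPhi y hy (hιker y hy), Submodule.Quotient.eq]
    exact ⟨-w, by simp [← hxy]⟩
  · rintro q ⟨r, rfl⟩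
    obtain ⟨⟨y, hy⟩, rfl⟩ := Submodule.Quotient.mk_surjective _ r
    rw [LinearMap.mem_ker, hPhi y hy (hιker y hy), hPsi, Submodule.Quotient.mk_eq_zero]
    exact hψι ⟨y, rfl⟩

end ChainLevel

namespace SecondaryHochschild

variable {k : Type*} [CommRing k] {A : Type*} [Ring A] [Algebra k A]
  {B : Type*} [CommRing B] [Algebra k B] {M : Type*} [AddCommGroup M] [Module k M]

variable (k A B M) in
noncomputable def insertUnits : M ⊗[k] B →ₗ[k] M ⊗[k] A ⊗[k] A ⊗[k] B :=
  LinearMap.rTensor B ((TensorProduct.mk k (M ⊗[k] A) A).flip 1 ∘ₗ (TensorProduct.mk k M A).flip 1)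

@[simp] theorem insertUnits_tmul (m : M) (α : B) :
    insertUnits k A B M (m ⊗ₜ α) = m ⊗ₜ (1 : A) ⊗ₜ (1 : A) ⊗ₜ α := rfl

variable (ε : B →ₐ[k] A) [Module A M] [Module Aᵐᵒᵖ M]

abbrev IsSecondaryDiff₂ (p2 : M ⊗[k] A ⊗[k] A ⊗[k] B →ₗ[k] M ⊗[k] A) : Prop :=
  ∀ (m : M) (a b : A) (α : B),
    p2 (m ⊗ₜ[k] a ⊗ₜ[k] b ⊗ₜ[k] α) =
      (op (a * ε α) • m) ⊗ₜ[k] b - m ⊗ₜ[k] (a * ε α * b) + ((b * ε α) • m) ⊗ₜ[k] a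

abbrev IsSecondaryDiff₃
    (p3 : M ⊗[k] A ⊗[k] A ⊗[k] A ⊗[k] B ⊗[k] B ⊗[k] B →ₗ[k] M ⊗[k] A ⊗[k] A ⊗[k] B) : Prop :=
  ∀ (m : M) (a b c : A) (α β γ : B),
    p3 (m ⊗ₜ[k] a ⊗ₜ[k] b ⊗ₜ[k] c ⊗ₜ[k] α ⊗ₜ[k] β ⊗ₜ[k] γ) =
      (op (a * ε (α * β)) • m) ⊗ₜ[k] b ⊗ₜ[k] c ⊗ₜ[k] γ
      - m ⊗ₜ[k] (a * ε α * b) ⊗ₜ[k] c ⊗ₜ[k] (β * γ)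
      + m ⊗ₜ[k] a ⊗ₜ[k] (b * ε γ * c) ⊗ₜ[k] (α * β)
      - ((c * ε (β * γ)) • m) ⊗ₜ[k] a ⊗ₜ[k] b ⊗ₜ[k] α

abbrev IsHochschildDiff₂Via (d2B : M ⊗[k] B ⊗[k] B →ₗ[k] M ⊗[k] B) : Prop :=
  ∀ (m : M) (α β : B),
    d2B (m ⊗ₜ[k] α ⊗ₜ[k] β) = (op (ε α) • m) ⊗ₜ[k] β - m ⊗ₜ[k] (α * β) + (ε β • m) ⊗ₜ[k] α

variable {ε}

theorem p2_comp_p3_eq_zero [SMulCommClass A Aᵐᵒᵖ M] (hcen : ∀ (b : B) (a : A), ε b * a = a * ε b)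
    (hsymm : ∀ (b : B) (m : M), ε b • m = op (ε b) • m)
    {p2 : M ⊗[k] A ⊗[k] A ⊗[k] B →ₗ[k] M ⊗[k] A} (hp2 : IsSecondaryDiff₂ ε p2)
    {p3 : M ⊗[k] A ⊗[k] A ⊗[k] A ⊗[k] B ⊗[k] B ⊗[k] B →ₗ[k] M ⊗[k] A ⊗[k] A ⊗[k] B}
    (hp3 : IsSecondaryDiff₃ ε p3) :
    p2 ∘ₗ p3 = 0 := by
  ext m a b c α β γ
  simp only [AlgebraTensorModule.curry_apply, curry_apply, LinearMap.restrictScalars_apply,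
    LinearMap.comp_apply, hp3, map_sub, map_add, hp2, LinearMap.zero_apply]
  obtain ⟨e1, e2, e3, e4⟩ :
      a * ε (α * β) * (b * ε γ) = a * ε α * b * ε (β * γ) ∧
      a * ε α * b * ε (β * γ) * c = a * ε (α * β) * (b * ε γ * c) ∧
      c * ε γ * ε β = c * ε (β * γ) ∧
      b * ε γ * c * ε (α * β) = b * ε α * (c * ε (β * γ)) := by
    -- `hcen` makes `A` a `B`-algebra through `ε`, in which these are scalar identities.
    let _ : Algebra B A := ε.toRingHom.toAlgebra' hcen
    have hε : ∀ p, ε p = p • (1 : A) := Algebra.algebraMap_eq_smul_one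
    simp only [hε, smul_mul_assoc, mul_smul_comm, smul_smul, mul_one, mul_assoc, mul_left_comm,
      mul_comm, and_self]
  have h3 : (c * ε γ) • op (a * ε (α * β)) • m = op (a * ε α) • (c * ε (β * γ)) • m := by
    rw [← smul_comm (c * ε (β * γ)), map_mul, ← mul_assoc, op_mul, mul_smul (op (ε β)), ← hsymm,
      smul_smul, e3]
  rw [smul_smul, ← op_mul, e1, e2, h3, smul_smul, e4]
  abel

theorem p2_comp_ι_eq_d2
    {d2 : M ⊗[k] A ⊗[k] A →ₗ[k] M ⊗[k] A}
    (hd2 : ∀ (m : M) (a b : A),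
      d2 (m ⊗ₜ[k] a ⊗ₜ[k] b) = (op a • m) ⊗ₜ[k] b - m ⊗ₜ[k] (a * b) + (b • m) ⊗ₜ[k] a)
    {p2 : M ⊗[k] A ⊗[k] A ⊗[k] B →ₗ[k] M ⊗[k] A} (hp2 : IsSecondaryDiff₂ ε p2)
    {ι : M ⊗[k] A ⊗[k] A →ₗ[k] M ⊗[k] A ⊗[k] A ⊗[k] B}
    (hι : ∀ (m : M) (a b : A), ι (m ⊗ₜ[k] a ⊗ₜ[k] b) = m ⊗ₜ[k] a ⊗ₜ[k] b ⊗ₜ[k] (1 : B)) :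
    p2 ∘ₗ ι = d2 := by
  ext m a b
  simp [hι, hp2, hd2]

theorem range_ψ_comp_ι_le
    {ι : M ⊗[k] A ⊗[k] A →ₗ[k] M ⊗[k] A ⊗[k] A ⊗[k] B}
    (hι : ∀ (m : M) (a b : A), ι (m ⊗ₜ[k] a ⊗ₜ[k] b) = m ⊗ₜ[k] a ⊗ₜ[k] b ⊗ₜ[k] (1 : B))
    {ψ : M ⊗[k] A ⊗[k] A ⊗[k] B →ₗ[k] M ⊗[k] B}
    (hψ : ∀ (m : M) (a b : A) (α : B), ψ (m ⊗ₜ[k] a ⊗ₜ[k] b ⊗ₜ[k] α) = (b • op a • m) ⊗ₜ[k] α)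
    {d2B : M ⊗[k] B ⊗[k] B →ₗ[k] M ⊗[k] B} (hd2B : IsHochschildDiff₂Via ε d2B) :
    LinearMap.range (ψ ∘ₗ ι) ≤ LinearMap.range d2B := by
  refine TensorProduct.range_le_of_tmul_mem₃ fun m a b => ⟨(b • op a • m) ⊗ₜ 1 ⊗ₜ 1, ?_⟩
  simp [hd2B, hι, hψ]

theorem range_id_sub_insertUnits_comp_ψ_le
    {p3 : M ⊗[k] A ⊗[k] A ⊗[k] A ⊗[k] B ⊗[k] B ⊗[k] B →ₗ[k] M ⊗[k] A ⊗[k] A ⊗[k] B}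
    (hp3 : IsSecondaryDiff₃ ε p3)
    {ι : M ⊗[k] A ⊗[k] A →ₗ[k] M ⊗[k] A ⊗[k] A ⊗[k] B}
    (hι : ∀ (m : M) (a b : A), ι (m ⊗ₜ[k] a ⊗ₜ[k] b) = m ⊗ₜ[k] a ⊗ₜ[k] b ⊗ₜ[k] (1 : B))
    {ψ : M ⊗[k] A ⊗[k] A ⊗[k] B →ₗ[k] M ⊗[k] B}
    (hψ : ∀ (m : M) (a b : A) (α : B), ψ (m ⊗ₜ[k] a ⊗ₜ[k] b ⊗ₜ[k] α) = (b • op a • m) ⊗ₜ[k] α) :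
    LinearMap.range (LinearMap.id - insertUnits k A B M ∘ₗ ψ) ≤
      LinearMap.range p3 ⊔ LinearMap.range ι := by
  refine TensorProduct.range_le_of_tmul_mem₄ fun m a b α => ?_
  have key : m ⊗ₜ a ⊗ₜ b ⊗ₜ α - insertUnits k A B M (ψ (m ⊗ₜ a ⊗ₜ b ⊗ₜ α)) =
      p3 ((op a • m) ⊗ₜ (1 : A) ⊗ₜ (1 : A) ⊗ₜ b ⊗ₜ α ⊗ₜ (1 : B) ⊗ₜ (1 : B)
          - m ⊗ₜ a ⊗ₜ (1 : A) ⊗ₜ b ⊗ₜ (1 : B) ⊗ₜ (1 : B) ⊗ₜ α)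
      + ι (m ⊗ₜ a ⊗ₜ (ε α * b) - ((b * ε α) • m) ⊗ₜ a ⊗ₜ (1 : A)
          - (op (a * ε α) • m) ⊗ₜ (1 : A) ⊗ₜ b + (op a • m) ⊗ₜ (ε α) ⊗ₜ b) := by
    simp only [map_sub, map_add, hp3, hι, hψ, insertUnits_tmul, map_one, mul_one, one_mul, op_mul,
      mul_smul]
    abel
  rw [LinearMap.sub_apply, LinearMap.comp_apply, LinearMap.id_apply, key]
  exact Submodule.add_mem_sup (LinearMap.mem_range_self p3 _) (LinearMap.mem_range_self ι _)

theorem range_insertUnits_comp_d2B_le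
    {p3 : M ⊗[k] A ⊗[k] A ⊗[k] A ⊗[k] B ⊗[k] B ⊗[k] B →ₗ[k] M ⊗[k] A ⊗[k] A ⊗[k] B}
    (hp3 : IsSecondaryDiff₃ ε p3)
    {ι : M ⊗[k] A ⊗[k] A →ₗ[k] M ⊗[k] A ⊗[k] A ⊗[k] B}
    (hι : ∀ (m : M) (a b : A), ι (m ⊗ₜ[k] a ⊗ₜ[k] b) = m ⊗ₜ[k] a ⊗ₜ[k] b ⊗ₜ[k] (1 : B))
    {d2B : M ⊗[k] B ⊗[k] B →ₗ[k] M ⊗[k] B} (hd2B : IsHochschildDiff₂Via ε d2B) :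
    LinearMap.range (insertUnits k A B M ∘ₗ d2B) ≤ LinearMap.range p3 ⊔ LinearMap.range ι := by
  refine TensorProduct.range_le_of_tmul_mem₃ fun m α β => ?_
  have key : insertUnits k A B M (d2B (m ⊗ₜ α ⊗ₜ β)) =
      p3 (m ⊗ₜ ε α ⊗ₜ (1 : A) ⊗ₜ (1 : A) ⊗ₜ (1 : B) ⊗ₜ (1 : B) ⊗ₜ β
          - m ⊗ₜ (1 : A) ⊗ₜ (1 : A) ⊗ₜ (1 : A) ⊗ₜ α ⊗ₜ β ⊗ₜ (1 : B))
      + ι ((op (ε (α * β)) • m) ⊗ₜ (1 : A) ⊗ₜ (1 : A)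
          + (ε β • m) ⊗ₜ ε α ⊗ₜ (1 : A) - m ⊗ₜ ε α ⊗ₜ ε β) := by
    simp only [map_sub, map_add, hp3, hι, hd2B, insertUnits_tmul, map_one, mul_one, one_mul]
    abel
  rw [LinearMap.comp_apply, key]
  exact Submodule.add_mem_sup (LinearMap.mem_range_self p3 _) (LinearMap.mem_range_self ι _)

end SecondaryHochschild

open SecondaryHochschild

theorem secondaryHochschild_exact_at_H2_general
    (k : Type*) [CommRing k]
    (A : Type*) [Ring A] [Algebra k A]
    (B : Type*) [CommRing B] [Algebra k B]
    (ε : B →ₐ[k] A) (hcen : ∀ (b : B) (a : A), ε b * a = a * ε b)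
    (M : Type*) [AddCommGroup M] [Module k M]
    [Module A M] [Module Aᵐᵒᵖ M] [SMulCommClass A Aᵐᵒᵖ M]
    (hsymm : ∀ (b : B) (m : M), ε b • m = op (ε b) • m)
    -- the usual Hochschild differentials d₂, d₃
    (d2 : M ⊗[k] A ⊗[k] A →ₗ[k] M ⊗[k] A)
    (hd2 : ∀ (m : M) (a b : A),
      d2 (m ⊗ₜ[k] a ⊗ₜ[k] b) =
        (op a • m) ⊗ₜ[k] b - m ⊗ₜ[k] (a * b) + (b • m) ⊗ₜ[k] a)
    (d3 : M ⊗[k] A ⊗[k] A ⊗[k] A →ₗ[k] M ⊗[k] A ⊗[k] A)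
    -- the secondary Hochschild differentials ∂₂, ∂₃
    (p2 : M ⊗[k] A ⊗[k] A ⊗[k] B →ₗ[k] M ⊗[k] A)
    (hp2 : ∀ (m : M) (a b : A) (α : B),
      p2 (m ⊗ₜ[k] a ⊗ₜ[k] b ⊗ₜ[k] α) =
        (op (a * ε α) • m) ⊗ₜ[k] b - m ⊗ₜ[k] (a * ε α * b) + ((b * ε α) • m) ⊗ₜ[k] a)
    (p3 : M ⊗[k] A ⊗[k] A ⊗[k] A ⊗[k] B ⊗[k] B ⊗[k] B →ₗ[k] M ⊗[k] A ⊗[k] A ⊗[k] B)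
    (hp3 : ∀ (m : M) (a b c : A) (α β γ : B),
      p3 (m ⊗ₜ[k] a ⊗ₜ[k] b ⊗ₜ[k] c ⊗ₜ[k] α ⊗ₜ[k] β ⊗ₜ[k] γ) =
        (op (a * ε (α * β)) • m) ⊗ₜ[k] b ⊗ₜ[k] c ⊗ₜ[k] γ
        - m ⊗ₜ[k] (a * ε α * b) ⊗ₜ[k] c ⊗ₜ[k] (β * γ)
        + m ⊗ₜ[k] a ⊗ₜ[k] (b * ε γ * c) ⊗ₜ[k] (α * β)
        - ((c * ε (β * γ)) • m) ⊗ₜ[k] a ⊗ₜ[k] b ⊗ₜ[k] α)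
    -- the Hochschild differential d₂^B for B with coefficients in M
    (d2B : M ⊗[k] B ⊗[k] B →ₗ[k] M ⊗[k] B)
    (hd2B : ∀ (m : M) (α β : B),
      d2B (m ⊗ₜ[k] α ⊗ₜ[k] β) =
        (op (ε α) • m) ⊗ₜ[k] β - m ⊗ₜ[k] (α * β) + (ε β • m) ⊗ₜ[k] α)
    -- the chain-level map m⊗a⊗b ↦ m⊗a⊗b⊗1_B
    (ι : M ⊗[k] A ⊗[k] A →ₗ[k] M ⊗[k] A ⊗[k] A ⊗[k] B)
    (hι : ∀ (m : M) (a b : A),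
      ι (m ⊗ₜ[k] a ⊗ₜ[k] b) = m ⊗ₜ[k] a ⊗ₜ[k] b ⊗ₜ[k] (1 : B))
    -- the chain-level map m⊗a⊗b⊗α ↦ bma⊗α
    (ψ : M ⊗[k] A ⊗[k] A ⊗[k] B →ₗ[k] M ⊗[k] B)
    (hψ : ∀ (m : M) (a b : A) (α : B),
      ψ (m ⊗ₜ[k] a ⊗ₜ[k] b ⊗ₜ[k] α) = (b • op a • m) ⊗ₜ[k] α)
    -- the induced map Φ² : H₂(A,M) → H₂((A,B,ε);M)
    (Phi2 : (↥(LinearMap.ker d2) ⧸ (LinearMap.range d3).comap (LinearMap.ker d2).subtype)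
        →ₗ[k] (↥(LinearMap.ker p2) ⧸ (LinearMap.range p3).comap (LinearMap.ker p2).subtype))
    (hPhi2 : ∀ (x : M ⊗[k] A ⊗[k] A) (hx : x ∈ LinearMap.ker d2) (hx' : ι x ∈ LinearMap.ker p2),
      Phi2 (Submodule.Quotient.mk ⟨x, hx⟩) = Submodule.Quotient.mk ⟨ι x, hx'⟩)
    -- the induced map Ψ : H₂((A,B,ε);M) → H₁(B,M)
    (Psi : (↥(LinearMap.ker p2) ⧸ (LinearMap.range p3).comap (LinearMap.ker p2).subtype)
        →ₗ[k] ((M ⊗[k] B) ⧸ LinearMap.range d2B))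
    (hPsi : ∀ (x : M ⊗[k] A ⊗[k] A ⊗[k] B) (hx : x ∈ LinearMap.ker p2),
      Psi (Submodule.Quotient.mk ⟨x, hx⟩) = Submodule.Quotient.mk (ψ x)) :
    LinearMap.ker Psi = LinearMap.range Phi2 :=
  ker_eq_range_of_comap_range_le_sup d2 d3 p2 p3 d2B ι ψ
    (p2_comp_p3_eq_zero hcen hsymm hp2 hp3) (p2_comp_ι_eq_d2 hd2 hp2 hι)
    (range_ψ_comp_ι_le hι hψ hd2B)
    (Submodule.comap_range_le_of_section_mod (range_id_sub_insertUnits_comp_ψ_le hp3 hι hψ)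
      (range_insertUnits_comp_d2B_le hp3 hι hd2B))
    Phi2 hPhi2 Psi hPsi

theorem secondaryHochschild_exact_at_H2
    (k : Type*) [CommRing k]
    (A : Type*) [Ring A] [Algebra k A]
    (B : Type*) [CommRing B] [Algebra k B]
    (ε : B →ₐ[k] A) (hcen : ∀ (b : B) (a : A), ε b * a = a * ε b)
    (M : Type*) [AddCommGroup M] [Module k M]
    [Module A M] [Module Aᵐᵒᵖ M] [SMulCommClass A Aᵐᵒᵖ M]
    [IsScalarTower k A M] [IsScalarTower k Aᵐᵒᵖ M]
    (hsymm : ∀ (b : B) (m : M), ε b • m = op (ε b) • m)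
    -- the usual Hochschild differentials d₂, d₃
    (d2 : M ⊗[k] A ⊗[k] A →ₗ[k] M ⊗[k] A)
    (hd2 : ∀ (m : M) (a b : A),
      d2 (m ⊗ₜ[k] a ⊗ₜ[k] b) =
        (op a • m) ⊗ₜ[k] b - m ⊗ₜ[k] (a * b) + (b • m) ⊗ₜ[k] a)
    (d3 : M ⊗[k] A ⊗[k] A ⊗[k] A →ₗ[k] M ⊗[k] A ⊗[k] A)
    (hd3 : ∀ (m : M) (a b c : A),
      d3 (m ⊗ₜ[k] a ⊗ₜ[k] b ⊗ₜ[k] c) =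
        (op a • m) ⊗ₜ[k] b ⊗ₜ[k] c - m ⊗ₜ[k] (a * b) ⊗ₜ[k] c
        + m ⊗ₜ[k] a ⊗ₜ[k] (b * c) - (c • m) ⊗ₜ[k] a ⊗ₜ[k] b)
    -- the secondary Hochschild differentials ∂₂, ∂₃
    (p2 : M ⊗[k] A ⊗[k] A ⊗[k] B →ₗ[k] M ⊗[k] A)
    (hp2 : ∀ (m : M) (a b : A) (α : B),
      p2 (m ⊗ₜ[k] a ⊗ₜ[k] b ⊗ₜ[k] α) =
        (op (a * ε α) • m) ⊗ₜ[k] b - m ⊗ₜ[k] (a * ε α * b) + ((b * ε α) • m) ⊗ₜ[k] a)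
    (p3 : M ⊗[k] A ⊗[k] A ⊗[k] A ⊗[k] B ⊗[k] B ⊗[k] B →ₗ[k] M ⊗[k] A ⊗[k] A ⊗[k] B)
    (hp3 : ∀ (m : M) (a b c : A) (α β γ : B),
      p3 (m ⊗ₜ[k] a ⊗ₜ[k] b ⊗ₜ[k] c ⊗ₜ[k] α ⊗ₜ[k] β ⊗ₜ[k] γ) =
        (op (a * ε (α * β)) • m) ⊗ₜ[k] b ⊗ₜ[k] c ⊗ₜ[k] γ
        - m ⊗ₜ[k] (a * ε α * b) ⊗ₜ[k] c ⊗ₜ[k] (β * γ)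
        + m ⊗ₜ[k] a ⊗ₜ[k] (b * ε γ * c) ⊗ₜ[k] (α * β)
        - ((c * ε (β * γ)) • m) ⊗ₜ[k] a ⊗ₜ[k] b ⊗ₜ[k] α)
    -- the Hochschild differential d₂^B for B with coefficients in M
    (d2B : M ⊗[k] B ⊗[k] B →ₗ[k] M ⊗[k] B)
    (hd2B : ∀ (m : M) (α β : B),
      d2B (m ⊗ₜ[k] α ⊗ₜ[k] β) =
        (op (ε α) • m) ⊗ₜ[k] β - m ⊗ₜ[k] (α * β) + (ε β • m) ⊗ₜ[k] α)
    -- the chain-level map m⊗a⊗b ↦ m⊗a⊗b⊗1_B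
    (ι : M ⊗[k] A ⊗[k] A →ₗ[k] M ⊗[k] A ⊗[k] A ⊗[k] B)
    (hι : ∀ (m : M) (a b : A),
      ι (m ⊗ₜ[k] a ⊗ₜ[k] b) = m ⊗ₜ[k] a ⊗ₜ[k] b ⊗ₜ[k] (1 : B))
    -- the chain-level map m⊗a⊗b⊗α ↦ bma⊗α
    (ψ : M ⊗[k] A ⊗[k] A ⊗[k] B →ₗ[k] M ⊗[k] B)
    (hψ : ∀ (m : M) (a b : A) (α : B),
      ψ (m ⊗ₜ[k] a ⊗ₜ[k] b ⊗ₜ[k] α) = (b • op a • m) ⊗ₜ[k] α)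
    -- the induced map Φ² : H₂(A,M) → H₂((A,B,ε);M)
    (Phi2 : (↥(LinearMap.ker d2) ⧸ (LinearMap.range d3).comap (LinearMap.ker d2).subtype)
        →ₗ[k] (↥(LinearMap.ker p2) ⧸ (LinearMap.range p3).comap (LinearMap.ker p2).subtype))
    (hPhi2 : ∀ (x : M ⊗[k] A ⊗[k] A) (hx : x ∈ LinearMap.ker d2) (hx' : ι x ∈ LinearMap.ker p2),
      Phi2 (Submodule.Quotient.mk ⟨x, hx⟩) = Submodule.Quotient.mk ⟨ι x, hx'⟩)
    -- the induced map Ψ : H₂((A,B,ε);M) → H₁(B,M)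
    (Psi : (↥(LinearMap.ker p2) ⧸ (LinearMap.range p3).comap (LinearMap.ker p2).subtype)
        →ₗ[k] ((M ⊗[k] B) ⧸ LinearMap.range d2B))
    (hPsi : ∀ (x : M ⊗[k] A ⊗[k] A ⊗[k] B) (hx : x ∈ LinearMap.ker p2),
      Psi (Submodule.Quotient.mk ⟨x, hx⟩) = Submodule.Quotient.mk (ψ x)) :
    LinearMap.ker Psi = LinearMap.range Phi2 :=
  secondaryHochschild_exact_at_H2_general k A B ε hcen M hsymm d2 hd2 d3 p2 hp2 p3 hp3 d2B hd2B ι hι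
    ψ hψ Phi2 hPhi2 Psi hPsi
end

section
/- The sequence H₂((A,B,ε);M) → H₁(B,M) → H₁(A,M) is exact at H₁(B,M): the kernel of ε_* equals the image of Ψ. -/
/-!
Exactness is checked on chains. On one side, e ∘ ψ + ∂₂ is the Hochschild boundary d₂ of
m ⊗ a ⊗ b ⊗ α ↦ ma ⊗ ε α ⊗ b + m ⊗ a ⊗ ε α b (this uses that ε α is central), so ε_* ∘ Ψ = 0.
On the other, if e z = d₂ w, then L z + w ⊗ 1 is a ∂₂-cycle whose ψ-image is z modulo im d₂^B,
where L(m ⊗ α) = m ⊗ 1 ⊗ 1 ⊗ α - 2 (m ⊗ ε α ⊗ 1 ⊗ 1): by B-symmetry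
∂₂(m ⊗ 1 ⊗ 1 ⊗ α) = 2 mε(α) ⊗ 1 - m ⊗ ε α and ∂₂(m ⊗ ε α ⊗ 1 ⊗ 1) = mε(α) ⊗ 1, so ∂₂ ∘ L = -e,
while ∂₂(w ⊗ 1) = d₂ w.
-/

open TensorProduct MulOpposite
set_option maxSynthPendingDepth 8

theorem Submodule.range_le_iff_mkQ_comp_eq_zero {R X Y : Type*} [CommRing R]
    [AddCommGroup X] [AddCommGroup Y] [Module R X] [Module R Y]
    (f : X →ₗ[R] Y) (p : Submodule R Y) : LinearMap.range f ≤ p ↔ p.mkQ ∘ₗ f = 0 := by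
  simpa using LinearMap.range_le_ker_iff (f := f) (g := p.mkQ)

theorem ker_eq_range_of_homotopy_of_lifts {k X₂ Y Z₁ Z₂ N W : Type*} [CommRing k]
    [AddCommGroup X₂] [AddCommGroup Y] [AddCommGroup Z₁] [AddCommGroup Z₂] [AddCommGroup N]
    [AddCommGroup W] [Module k X₂] [Module k Y] [Module k Z₁] [Module k Z₂] [Module k N]
    [Module k W] {p2 : X₂ →ₗ[k] Z₁} {d1 : Z₁ →ₗ[k] N} {d2 : Z₂ →ₗ[k] Z₁} {d2B : W →ₗ[k] Y}
    {ψ : X₂ →ₗ[k] Y} {e : Y →ₗ[k] Z₁} {S : Submodule k (LinearMap.ker p2)}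
    (Psi : (LinearMap.ker p2 ⧸ S) →ₗ[k] Y ⧸ LinearMap.range d2B)
    (hPsi : ∀ x (hx : x ∈ LinearMap.ker p2),
      Psi (Submodule.Quotient.mk ⟨x, hx⟩) = Submodule.Quotient.mk (ψ x))
    (εs : Y ⧸ LinearMap.range d2B →ₗ[k]
      LinearMap.ker d1 ⧸ (LinearMap.range d2).comap (LinearMap.ker d1).subtype)
    (hεs : ∀ z (hz : e z ∈ LinearMap.ker d1),
      εs (Submodule.Quotient.mk z) = Submodule.Quotient.mk ⟨e z, hz⟩)
    (hd1e : d1 ∘ₗ e = 0) (hhomotopy : LinearMap.range (e ∘ₗ ψ + p2) ≤ LinearMap.range d2)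
    (L : Y →ₗ[k] X₂) (hp2L : p2 ∘ₗ L = -e)
    (hψL : LinearMap.range (ψ ∘ₗ L - LinearMap.id) ≤ LinearMap.range d2B)
    (ι : Z₂ →ₗ[k] X₂) (hp2ι : p2 ∘ₗ ι = d2)
    (hψι : LinearMap.range (ψ ∘ₗ ι) ≤ LinearMap.range d2B) :
    LinearMap.ker εs = LinearMap.range Psi := by
  have he_mem (z : Y) : e z ∈ LinearMap.ker d1 := LinearMap.range_le_ker_iff.2 hd1e ⟨z, rfl⟩
  have hεs_eq_zero (z : Y) : εs (Submodule.Quotient.mk z) = 0 ↔ e z ∈ LinearMap.range d2 := by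
    rw [hεs z (he_mem z), Submodule.Quotient.mk_eq_zero]
    rfl
  apply le_antisymm
  · intro y hy
    obtain ⟨z, rfl⟩ := Submodule.Quotient.mk_surjective _ y
    obtain ⟨w, hw⟩ := (hεs_eq_zero z).1 hy
    have hx : L z + ι w ∈ LinearMap.ker p2 := by
      rw [LinearMap.mem_ker, map_add, ← LinearMap.comp_apply, hp2L, ← LinearMap.comp_apply,
        hp2ι, hw, LinearMap.neg_apply, neg_add_cancel]
    refine ⟨Submodule.Quotient.mk ⟨_, hx⟩, ?_⟩
    rw [hPsi _ hx, Submodule.Quotient.eq]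
    have hsplit : ψ (L z + ι w) - z = (ψ ∘ₗ L - LinearMap.id : Y →ₗ[k] Y) z + (ψ ∘ₗ ι) w := by
      simp only [map_add, LinearMap.sub_apply, LinearMap.comp_apply, LinearMap.id_apply]
      abel
    rw [hsplit]
    exact add_mem (hψL ⟨z, rfl⟩) (hψι ⟨w, rfl⟩)
  · rintro _ ⟨q, rfl⟩
    obtain ⟨⟨x, hx⟩, rfl⟩ := Submodule.Quotient.mk_surjective _ q
    rw [LinearMap.mem_ker, hPsi x hx, hεs_eq_zero]
    simpa [LinearMap.mem_ker.1 hx] using hhomotopy ⟨x, rfl⟩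

section SecondaryHochschild

variable {k A B M : Type*} [CommRing k] [Ring A] [Algebra k A] [CommRing B] [Algebra k B]
  [AddCommGroup M] [Module k M] {ε : B →ₐ[k] A}

variable (ε) in
def secondaryLift : M ⊗[k] B →ₗ[k] M ⊗[k] A ⊗[k] A ⊗[k] B :=
  LinearMap.rTensor B ((TensorProduct.mk k (M ⊗[k] A) A).flip 1 ∘ₗ (TensorProduct.mk k M A).flip 1)
    - 2 • ((TensorProduct.mk k (M ⊗[k] A ⊗[k] A) B).flip 1 ∘ₗ
      (TensorProduct.mk k (M ⊗[k] A) A).flip 1 ∘ₗ LinearMap.lTensor M ε.toLinearMap)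

@[simp]
theorem secondaryLift_tmul (m : M) (α : B) :
    secondaryLift ε (m ⊗ₜ[k] α) =
      m ⊗ₜ[k] (1 : A) ⊗ₜ[k] (1 : A) ⊗ₜ[k] α - 2 • (m ⊗ₜ[k] ε α ⊗ₜ[k] (1 : A) ⊗ₜ[k] (1 : B)) := by
  simp [secondaryLift, two_nsmul]

variable [Module A M] [Module Aᵐᵒᵖ M]

theorem d1_comp_e_eq_zero (hsymm : ∀ (b : B) (m : M), ε b • m = op (ε b) • m)
    {d1 : M ⊗[k] A →ₗ[k] M} (hd1 : ∀ (m : M) (a : A), d1 (m ⊗ₜ[k] a) = op a • m - a • m)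
    {e : M ⊗[k] B →ₗ[k] M ⊗[k] A} (he : ∀ (m : M) (α : B), e (m ⊗ₜ[k] α) = m ⊗ₜ[k] ε α) :
    d1 ∘ₗ e = 0 :=
  TensorProduct.ext' fun m α => by simp [hd1, he, hsymm]

theorem range_e_comp_ψ_add_p2_le_range_d2 (hcen : ∀ (b : B) (a : A), ε b * a = a * ε b)
    {d2 : M ⊗[k] A ⊗[k] A →ₗ[k] M ⊗[k] A}
    (hd2 : ∀ (m : M) (a b : A),
      d2 (m ⊗ₜ[k] a ⊗ₜ[k] b) = (op a • m) ⊗ₜ[k] b - m ⊗ₜ[k] (a * b) + (b • m) ⊗ₜ[k] a)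
    {p2 : M ⊗[k] A ⊗[k] A ⊗[k] B →ₗ[k] M ⊗[k] A}
    (hp2 : ∀ (m : M) (a b : A) (α : B),
      p2 (m ⊗ₜ[k] a ⊗ₜ[k] b ⊗ₜ[k] α) =
        (op (a * ε α) • m) ⊗ₜ[k] b - m ⊗ₜ[k] (a * ε α * b) + ((b * ε α) • m) ⊗ₜ[k] a)
    {ψ : M ⊗[k] A ⊗[k] A ⊗[k] B →ₗ[k] M ⊗[k] B}
    (hψ : ∀ (m : M) (a b : A) (α : B), ψ (m ⊗ₜ[k] a ⊗ₜ[k] b ⊗ₜ[k] α) = (b • op a • m) ⊗ₜ[k] α)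
    {e : M ⊗[k] B →ₗ[k] M ⊗[k] A} (he : ∀ (m : M) (α : B), e (m ⊗ₜ[k] α) = m ⊗ₜ[k] ε α) :
    LinearMap.range (e ∘ₗ ψ + p2) ≤ LinearMap.range d2 := by
  rw [Submodule.range_le_iff_mkQ_comp_eq_zero]
  refine TensorProduct.ext_fourfold fun m a b α => ?_
  simp only [LinearMap.comp_apply, LinearMap.add_apply, Submodule.mkQ_apply, LinearMap.zero_apply,
    Submodule.Quotient.mk_eq_zero]
  refine ⟨(op a • m) ⊗ₜ[k] ε α ⊗ₜ[k] b + m ⊗ₜ[k] a ⊗ₜ[k] (ε α * b), ?_⟩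
  rw [map_add, hd2, hd2, hψ, he, hp2, ← mul_smul, ← op_mul, ← mul_assoc, hcen]
  abel

theorem p2_comp_secondaryLift (hsymm : ∀ (b : B) (m : M), ε b • m = op (ε b) • m)
    {p2 : M ⊗[k] A ⊗[k] A ⊗[k] B →ₗ[k] M ⊗[k] A}
    (hp2 : ∀ (m : M) (a b : A) (α : B),
      p2 (m ⊗ₜ[k] a ⊗ₜ[k] b ⊗ₜ[k] α) =
        (op (a * ε α) • m) ⊗ₜ[k] b - m ⊗ₜ[k] (a * ε α * b) + ((b * ε α) • m) ⊗ₜ[k] a)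
    {e : M ⊗[k] B →ₗ[k] M ⊗[k] A} (he : ∀ (m : M) (α : B), e (m ⊗ₜ[k] α) = m ⊗ₜ[k] ε α) :
    p2 ∘ₗ secondaryLift ε = -e := by
  refine TensorProduct.ext' fun m α => ?_
  simp only [LinearMap.comp_apply, secondaryLift_tmul, map_sub, map_nsmul, hp2, he, hsymm,
    LinearMap.neg_apply, map_one, one_mul, mul_one, one_smul]
  abel

theorem range_ψ_comp_secondaryLift_sub_id_le_range_d2B
    {d2B : M ⊗[k] B ⊗[k] B →ₗ[k] M ⊗[k] B}
    (hd2B : ∀ (m : M) (α β : B),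
      d2B (m ⊗ₜ[k] α ⊗ₜ[k] β) = (op (ε α) • m) ⊗ₜ[k] β - m ⊗ₜ[k] (α * β) + (ε β • m) ⊗ₜ[k] α)
    {ψ : M ⊗[k] A ⊗[k] A ⊗[k] B →ₗ[k] M ⊗[k] B}
    (hψ : ∀ (m : M) (a b : A) (α : B), ψ (m ⊗ₜ[k] a ⊗ₜ[k] b ⊗ₜ[k] α) = (b • op a • m) ⊗ₜ[k] α) :
    LinearMap.range (ψ ∘ₗ secondaryLift ε - LinearMap.id) ≤ LinearMap.range d2B := by
  rw [Submodule.range_le_iff_mkQ_comp_eq_zero]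
  refine TensorProduct.ext' fun m α => ?_
  simp only [LinearMap.comp_apply, LinearMap.sub_apply, Submodule.mkQ_apply, LinearMap.zero_apply,
    Submodule.Quotient.mk_eq_zero]
  refine ⟨-(2 • m ⊗ₜ[k] α ⊗ₜ[k] (1 : B)), ?_⟩
  simp [hd2B, hψ]

theorem p2_comp_tmul_one
    {d2 : M ⊗[k] A ⊗[k] A →ₗ[k] M ⊗[k] A}
    (hd2 : ∀ (m : M) (a b : A),
      d2 (m ⊗ₜ[k] a ⊗ₜ[k] b) = (op a • m) ⊗ₜ[k] b - m ⊗ₜ[k] (a * b) + (b • m) ⊗ₜ[k] a)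
    {p2 : M ⊗[k] A ⊗[k] A ⊗[k] B →ₗ[k] M ⊗[k] A}
    (hp2 : ∀ (m : M) (a b : A) (α : B),
      p2 (m ⊗ₜ[k] a ⊗ₜ[k] b ⊗ₜ[k] α) =
        (op (a * ε α) • m) ⊗ₜ[k] b - m ⊗ₜ[k] (a * ε α * b) + ((b * ε α) • m) ⊗ₜ[k] a) :
    p2 ∘ₗ (TensorProduct.mk k (M ⊗[k] A ⊗[k] A) B).flip 1 = d2 :=
  TensorProduct.ext_threefold fun m a b => by simp [hp2, hd2]

theorem range_ψ_comp_tmul_one_le_range_d2B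
    {d2B : M ⊗[k] B ⊗[k] B →ₗ[k] M ⊗[k] B}
    (hd2B : ∀ (m : M) (α β : B),
      d2B (m ⊗ₜ[k] α ⊗ₜ[k] β) = (op (ε α) • m) ⊗ₜ[k] β - m ⊗ₜ[k] (α * β) + (ε β • m) ⊗ₜ[k] α)
    {ψ : M ⊗[k] A ⊗[k] A ⊗[k] B →ₗ[k] M ⊗[k] B}
    (hψ : ∀ (m : M) (a b : A) (α : B), ψ (m ⊗ₜ[k] a ⊗ₜ[k] b ⊗ₜ[k] α) = (b • op a • m) ⊗ₜ[k] α) :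
    LinearMap.range (ψ ∘ₗ (TensorProduct.mk k (M ⊗[k] A ⊗[k] A) B).flip 1) ≤
      LinearMap.range d2B := by
  rw [Submodule.range_le_iff_mkQ_comp_eq_zero]
  refine TensorProduct.ext_threefold fun m a b => ?_
  simp only [LinearMap.comp_apply, Submodule.mkQ_apply, LinearMap.zero_apply,
    Submodule.Quotient.mk_eq_zero]
  exact ⟨(b • op a • m) ⊗ₜ[k] (1 : B) ⊗ₜ[k] (1 : B), by simp [hd2B, hψ]⟩

end SecondaryHochschild

theorem secondaryHochschild_exact_at_H1B_general
    (k : Type*) [CommRing k]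
    (A : Type*) [Ring A] [Algebra k A]
    (B : Type*) [CommRing B] [Algebra k B]
    (ε : B →ₐ[k] A) (hcen : ∀ (b : B) (a : A), ε b * a = a * ε b)
    (M : Type*) [AddCommGroup M] [Module k M]
    [Module A M] [Module Aᵐᵒᵖ M]
    (hsymm : ∀ (b : B) (m : M), ε b • m = op (ε b) • m)
    -- the usual Hochschild differentials d₁, d₂ for A
    (d1 : M ⊗[k] A →ₗ[k] M)
    (hd1 : ∀ (m : M) (a : A), d1 (m ⊗ₜ[k] a) = op a • m - a • m)
    (d2 : M ⊗[k] A ⊗[k] A →ₗ[k] M ⊗[k] A)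
    (hd2 : ∀ (m : M) (a b : A),
      d2 (m ⊗ₜ[k] a ⊗ₜ[k] b) =
        (op a • m) ⊗ₜ[k] b - m ⊗ₜ[k] (a * b) + (b • m) ⊗ₜ[k] a)
    -- the secondary Hochschild differentials ∂₂, ∂₃
    (p2 : M ⊗[k] A ⊗[k] A ⊗[k] B →ₗ[k] M ⊗[k] A)
    (hp2 : ∀ (m : M) (a b : A) (α : B),
      p2 (m ⊗ₜ[k] a ⊗ₜ[k] b ⊗ₜ[k] α) =
        (op (a * ε α) • m) ⊗ₜ[k] b - m ⊗ₜ[k] (a * ε α * b) + ((b * ε α) • m) ⊗ₜ[k] a)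
    (p3 : M ⊗[k] A ⊗[k] A ⊗[k] A ⊗[k] B ⊗[k] B ⊗[k] B →ₗ[k] M ⊗[k] A ⊗[k] A ⊗[k] B)
    -- the Hochschild differential d₂^B for B with coefficients in M
    (d2B : M ⊗[k] B ⊗[k] B →ₗ[k] M ⊗[k] B)
    (hd2B : ∀ (m : M) (α β : B),
      d2B (m ⊗ₜ[k] α ⊗ₜ[k] β) =
        (op (ε α) • m) ⊗ₜ[k] β - m ⊗ₜ[k] (α * β) + (ε β • m) ⊗ₜ[k] α)
    -- the chain-level map m⊗a⊗b⊗α ↦ bma⊗α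
    (ψ : M ⊗[k] A ⊗[k] A ⊗[k] B →ₗ[k] M ⊗[k] B)
    (hψ : ∀ (m : M) (a b : A) (α : B),
      ψ (m ⊗ₜ[k] a ⊗ₜ[k] b ⊗ₜ[k] α) = (b • op a • m) ⊗ₜ[k] α)
    -- the chain-level map m⊗α ↦ m⊗ε(α)
    (e : M ⊗[k] B →ₗ[k] M ⊗[k] A)
    (he : ∀ (m : M) (α : B), e (m ⊗ₜ[k] α) = m ⊗ₜ[k] ε α)
    -- the induced map Ψ : H₂((A,B,ε);M) → H₁(B,M)
    (Psi : (↥(LinearMap.ker p2) ⧸ (LinearMap.range p3).comap (LinearMap.ker p2).subtype)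
        →ₗ[k] ((M ⊗[k] B) ⧸ LinearMap.range d2B))
    (hPsi : ∀ (x : M ⊗[k] A ⊗[k] A ⊗[k] B) (hx : x ∈ LinearMap.ker p2),
      Psi (Submodule.Quotient.mk ⟨x, hx⟩) = Submodule.Quotient.mk (ψ x))
    -- the induced map ε_* : H₁(B,M) → H₁(A,M)
    (εs : ((M ⊗[k] B) ⧸ LinearMap.range d2B)
        →ₗ[k] (↥(LinearMap.ker d1) ⧸ (LinearMap.range d2).comap (LinearMap.ker d1).subtype))
    (hεs : ∀ (z : M ⊗[k] B) (hz : e z ∈ LinearMap.ker d1),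
      εs (Submodule.Quotient.mk z) = Submodule.Quotient.mk ⟨e z, hz⟩) :
    LinearMap.ker εs = LinearMap.range Psi :=
  ker_eq_range_of_homotopy_of_lifts Psi hPsi εs hεs (d1_comp_e_eq_zero hsymm hd1 he)
    (range_e_comp_ψ_add_p2_le_range_d2 hcen hd2 hp2 hψ he) (secondaryLift ε)
    (p2_comp_secondaryLift hsymm hp2 he) (range_ψ_comp_secondaryLift_sub_id_le_range_d2B hd2B hψ)
    _ (p2_comp_tmul_one hd2 hp2) (range_ψ_comp_tmul_one_le_range_d2B hd2B hψ)

theorem secondaryHochschild_exact_at_H1B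
    (k : Type*) [CommRing k]
    (A : Type*) [Ring A] [Algebra k A]
    (B : Type*) [CommRing B] [Algebra k B]
    (ε : B →ₐ[k] A) (hcen : ∀ (b : B) (a : A), ε b * a = a * ε b)
    (M : Type*) [AddCommGroup M] [Module k M]
    [Module A M] [Module Aᵐᵒᵖ M] [SMulCommClass A Aᵐᵒᵖ M]
    [IsScalarTower k A M] [IsScalarTower k Aᵐᵒᵖ M]
    (hsymm : ∀ (b : B) (m : M), ε b • m = op (ε b) • m)
    -- the usual Hochschild differentials d₁, d₂ for A
    (d1 : M ⊗[k] A →ₗ[k] M)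
    (hd1 : ∀ (m : M) (a : A), d1 (m ⊗ₜ[k] a) = op a • m - a • m)
    (d2 : M ⊗[k] A ⊗[k] A →ₗ[k] M ⊗[k] A)
    (hd2 : ∀ (m : M) (a b : A),
      d2 (m ⊗ₜ[k] a ⊗ₜ[k] b) =
        (op a • m) ⊗ₜ[k] b - m ⊗ₜ[k] (a * b) + (b • m) ⊗ₜ[k] a)
    -- the secondary Hochschild differentials ∂₂, ∂₃
    (p2 : M ⊗[k] A ⊗[k] A ⊗[k] B →ₗ[k] M ⊗[k] A)
    (hp2 : ∀ (m : M) (a b : A) (α : B),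
      p2 (m ⊗ₜ[k] a ⊗ₜ[k] b ⊗ₜ[k] α) =
        (op (a * ε α) • m) ⊗ₜ[k] b - m ⊗ₜ[k] (a * ε α * b) + ((b * ε α) • m) ⊗ₜ[k] a)
    (p3 : M ⊗[k] A ⊗[k] A ⊗[k] A ⊗[k] B ⊗[k] B ⊗[k] B →ₗ[k] M ⊗[k] A ⊗[k] A ⊗[k] B)
    (hp3 : ∀ (m : M) (a b c : A) (α β γ : B),
      p3 (m ⊗ₜ[k] a ⊗ₜ[k] b ⊗ₜ[k] c ⊗ₜ[k] α ⊗ₜ[k] β ⊗ₜ[k] γ) =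
        (op (a * ε (α * β)) • m) ⊗ₜ[k] b ⊗ₜ[k] c ⊗ₜ[k] γ
        - m ⊗ₜ[k] (a * ε α * b) ⊗ₜ[k] c ⊗ₜ[k] (β * γ)
        + m ⊗ₜ[k] a ⊗ₜ[k] (b * ε γ * c) ⊗ₜ[k] (α * β)
        - ((c * ε (β * γ)) • m) ⊗ₜ[k] a ⊗ₜ[k] b ⊗ₜ[k] α)
    -- the Hochschild differential d₂^B for B with coefficients in M
    (d2B : M ⊗[k] B ⊗[k] B →ₗ[k] M ⊗[k] B)
    (hd2B : ∀ (m : M) (α β : B),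
      d2B (m ⊗ₜ[k] α ⊗ₜ[k] β) =
        (op (ε α) • m) ⊗ₜ[k] β - m ⊗ₜ[k] (α * β) + (ε β • m) ⊗ₜ[k] α)
    -- the chain-level map m⊗a⊗b⊗α ↦ bma⊗α
    (ψ : M ⊗[k] A ⊗[k] A ⊗[k] B →ₗ[k] M ⊗[k] B)
    (hψ : ∀ (m : M) (a b : A) (α : B),
      ψ (m ⊗ₜ[k] a ⊗ₜ[k] b ⊗ₜ[k] α) = (b • op a • m) ⊗ₜ[k] α)
    -- the chain-level map m⊗α ↦ m⊗ε(α)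
    (e : M ⊗[k] B →ₗ[k] M ⊗[k] A)
    (he : ∀ (m : M) (α : B), e (m ⊗ₜ[k] α) = m ⊗ₜ[k] ε α)
    -- the induced map Ψ : H₂((A,B,ε);M) → H₁(B,M)
    (Psi : (↥(LinearMap.ker p2) ⧸ (LinearMap.range p3).comap (LinearMap.ker p2).subtype)
        →ₗ[k] ((M ⊗[k] B) ⧸ LinearMap.range d2B))
    (hPsi : ∀ (x : M ⊗[k] A ⊗[k] A ⊗[k] B) (hx : x ∈ LinearMap.ker p2),
      Psi (Submodule.Quotient.mk ⟨x, hx⟩) = Submodule.Quotient.mk (ψ x))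
    -- the induced map ε_* : H₁(B,M) → H₁(A,M)
    (εs : ((M ⊗[k] B) ⧸ LinearMap.range d2B)
        →ₗ[k] (↥(LinearMap.ker d1) ⧸ (LinearMap.range d2).comap (LinearMap.ker d1).subtype))
    (hεs : ∀ (z : M ⊗[k] B) (hz : e z ∈ LinearMap.ker d1),
      εs (Submodule.Quotient.mk z) = Submodule.Quotient.mk ⟨e z, hz⟩) :
    LinearMap.ker εs = LinearMap.range Psi :=
  secondaryHochschild_exact_at_H1B_general k A B ε hcen M hsymm d1 hd1 d2 hd2 p2 hp2 p3 d2B hd2B ψ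
    hψ e he Psi hPsi εs hεs
end

section
/- The sequence H₁(B,M) → H₁(A,M) → H₁((A,B,ε);M) is exact at H₁(A,M): the kernel of Φ¹ equals the image of ε_*. -/
/-!
On chains, `Φ¹` is the identity of `M ⊗ A` and `ε_*` is `m ⊗ α ↦ m ⊗ ε α`, so exactness at
`H₁(A,M)` amounts to two facts about boundaries: every `m ⊗ ε α` is a secondary boundary, and every
secondary boundary is a Hochschild boundary plus a chain of the form `m ⊗ ε α`. The first is
witnessed by `∂₂(m ⊗ ε α ⊗ 1 ⊗ 1 + ε α • m ⊗ 1 ⊗ 1 ⊗ 1 - m ⊗ 1 ⊗ 1 ⊗ α)`. For the second,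
centrality of `ε α` gives
`∂₂(m ⊗ a ⊗ b ⊗ α) = d₂(m ⊗ a ε α ⊗ b) + d₂(b m ⊗ a ⊗ ε α) - (b m a) ⊗ ε α`.
-/

open TensorProduct MulOpposite

set_option maxSynthPendingDepth 8

section Homology

variable {R V W : Type*} [CommRing R] [AddCommGroup V] [Module R V] [AddCommGroup W] [Module R W]

theorem ker_eq_range_of_le_sup_range {Z Bd Bd' : Submodule R V} {N : Submodule R W}
    {f : W →ₗ[R] V} (hfZ : ∀ w, f w ∈ Z)
    (fs : W ⧸ N →ₗ[R] Z ⧸ Bd.comap Z.subtype)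
    (hfs : ∀ w, fs (Submodule.Quotient.mk w) = Submodule.Quotient.mk ⟨f w, hfZ w⟩)
    (Φ : Z ⧸ Bd.comap Z.subtype →ₗ[R] Z ⧸ Bd'.comap Z.subtype)
    (hΦ : ∀ x, Φ (Submodule.Quotient.mk x) = Submodule.Quotient.mk x)
    (hfBd' : LinearMap.range f ≤ Bd') (hBd' : Bd' ≤ Bd ⊔ LinearMap.range f) :
    LinearMap.ker Φ = LinearMap.range fs := by
  ext c
  constructor
  · obtain ⟨x, rfl⟩ := Submodule.Quotient.mk_surjective _ c
    intro hx
    rw [LinearMap.mem_ker, hΦ, Submodule.Quotient.mk_eq_zero, Submodule.mem_comap] at hx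
    obtain ⟨b, hb, _, ⟨w, rfl⟩, hsum⟩ := Submodule.mem_sup.1 (hBd' hx)
    refine ⟨Submodule.Quotient.mk w, ?_⟩
    rw [hfs, Submodule.Quotient.eq, Submodule.mem_comap]
    have hdiff : f w - x = -b := by rw [← Submodule.subtype_apply, ← hsum]; abel
    simpa only [map_sub, Submodule.subtype_apply, hdiff] using neg_mem hb
  · rintro ⟨q, rfl⟩
    obtain ⟨w, rfl⟩ := Submodule.Quotient.mk_surjective _ q
    rw [LinearMap.mem_ker, hfs, hΦ, Submodule.Quotient.mk_eq_zero]
    exact hfBd' (LinearMap.mem_range_self f w)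

end Homology

namespace TensorProduct

variable {R M N P Q V : Type*} [CommRing R] [AddCommGroup M] [Module R M] [AddCommGroup N]
  [Module R N] [AddCommGroup P] [Module R P] [AddCommGroup Q] [Module R Q] [AddCommGroup V]
  [Module R V]

theorem range_le_of_forall_tmul_mem {f : M ⊗[R] N →ₗ[R] V} {S : Submodule R V}
    (h : ∀ m n, f (m ⊗ₜ n) ∈ S) : LinearMap.range f ≤ S := by
  rw [← S.ker_mkQ, LinearMap.range_le_ker_iff]
  exact ext' fun m n => (Submodule.Quotient.mk_eq_zero S).2 (h m n)

theorem range_le_of_forall_tmul_mem_fourfold {f : M ⊗[R] N ⊗[R] P ⊗[R] Q →ₗ[R] V}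
    {S : Submodule R V} (h : ∀ m n p q, f (m ⊗ₜ n ⊗ₜ p ⊗ₜ q) ∈ S) : LinearMap.range f ≤ S := by
  rw [← S.ker_mkQ, LinearMap.range_le_ker_iff]
  exact ext_fourfold fun m n p q => (Submodule.Quotient.mk_eq_zero S).2 (h m n p q)

end TensorProduct

section SecondaryHochschild

variable {k A B M : Type*} [CommRing k] [Ring A] [Algebra k A] [CommRing B] [Algebra k B]
  [AddCommGroup M] [Module k M] [Module A M] [Module Aᵐᵒᵖ M] {ε : B →ₐ[k] A}
  {d1 : M ⊗[k] A →ₗ[k] M} {d2 : M ⊗[k] A ⊗[k] A →ₗ[k] M ⊗[k] A}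
  {p2 : M ⊗[k] A ⊗[k] A ⊗[k] B →ₗ[k] M ⊗[k] A} {e : M ⊗[k] B →ₗ[k] M ⊗[k] A}

theorem range_epsilonChain_le_ker_d1 (hsymm : ∀ (b : B) (m : M), ε b • m = op (ε b) • m)
    (hd1 : ∀ (m : M) (a : A), d1 (m ⊗ₜ[k] a) = op a • m - a • m)
    (he : ∀ (m : M) (α : B), e (m ⊗ₜ[k] α) = m ⊗ₜ[k] ε α) :
    LinearMap.range e ≤ LinearMap.ker d1 :=
  range_le_of_forall_tmul_mem fun m α => by rw [LinearMap.mem_ker, he, hd1, hsymm, sub_self]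

theorem range_epsilonChain_le_range_secondaryD2
    (hp2 : ∀ (m : M) (a b : A) (α : B), p2 (m ⊗ₜ[k] a ⊗ₜ[k] b ⊗ₜ[k] α) =
      (op (a * ε α) • m) ⊗ₜ[k] b - m ⊗ₜ[k] (a * ε α * b) + ((b * ε α) • m) ⊗ₜ[k] a)
    (he : ∀ (m : M) (α : B), e (m ⊗ₜ[k] α) = m ⊗ₜ[k] ε α) :
    LinearMap.range e ≤ LinearMap.range p2 :=
  range_le_of_forall_tmul_mem fun m α => ⟨m ⊗ₜ ε α ⊗ₜ 1 ⊗ₜ 1 + (ε α • m) ⊗ₜ 1 ⊗ₜ 1 ⊗ₜ 1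
      - m ⊗ₜ 1 ⊗ₜ 1 ⊗ₜ α, by
    rw [map_sub, map_add, hp2, hp2, hp2, he]
    simp only [map_one, mul_one, one_mul, one_smul, op_one]
    abel⟩

theorem range_secondaryD2_le_range_d2_sup_range_epsilonChain
    (hcen : ∀ (b : B) (a : A), ε b * a = a * ε b)
    (hd2 : ∀ (m : M) (a b : A),
      d2 (m ⊗ₜ[k] a ⊗ₜ[k] b) = (op a • m) ⊗ₜ[k] b - m ⊗ₜ[k] (a * b) + (b • m) ⊗ₜ[k] a)
    (hp2 : ∀ (m : M) (a b : A) (α : B), p2 (m ⊗ₜ[k] a ⊗ₜ[k] b ⊗ₜ[k] α) =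
      (op (a * ε α) • m) ⊗ₜ[k] b - m ⊗ₜ[k] (a * ε α * b) + ((b * ε α) • m) ⊗ₜ[k] a)
    (he : ∀ (m : M) (α : B), e (m ⊗ₜ[k] α) = m ⊗ₜ[k] ε α) :
    LinearMap.range p2 ≤ LinearMap.range d2 ⊔ LinearMap.range e := by
  refine range_le_of_forall_tmul_mem_fourfold fun m a b α => ?_
  have hdecomp : p2 (m ⊗ₜ a ⊗ₜ b ⊗ₜ α) =
      d2 (m ⊗ₜ (a * ε α) ⊗ₜ b) + d2 ((b • m) ⊗ₜ a ⊗ₜ ε α) - e ((op a • b • m) ⊗ₜ α) := by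
    rw [hp2, hd2, hd2, he, ← hcen α b, mul_smul]
    abel
  rw [hdecomp]
  exact sub_mem (add_mem (Submodule.mem_sup_left ⟨_, rfl⟩) (Submodule.mem_sup_left ⟨_, rfl⟩))
    (Submodule.mem_sup_right ⟨_, rfl⟩)

end SecondaryHochschild

theorem secondaryHochschild_exact_at_H1A_general
    (k : Type*) [CommRing k]
    (A : Type*) [Ring A] [Algebra k A]
    (B : Type*) [CommRing B] [Algebra k B]
    (ε : B →ₐ[k] A) (hcen : ∀ (b : B) (a : A), ε b * a = a * ε b)
    (M : Type*) [AddCommGroup M] [Module k M]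
    [Module A M] [Module Aᵐᵒᵖ M]
    (hsymm : ∀ (b : B) (m : M), ε b • m = op (ε b) • m)
    -- the usual Hochschild differentials d₁, d₂ for A
    (d1 : M ⊗[k] A →ₗ[k] M)
    (hd1 : ∀ (m : M) (a : A), d1 (m ⊗ₜ[k] a) = op a • m - a • m)
    (d2 : M ⊗[k] A ⊗[k] A →ₗ[k] M ⊗[k] A)
    (hd2 : ∀ (m : M) (a b : A),
      d2 (m ⊗ₜ[k] a ⊗ₜ[k] b) =
        (op a • m) ⊗ₜ[k] b - m ⊗ₜ[k] (a * b) + (b • m) ⊗ₜ[k] a)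
    -- the Hochschild differential d₂^B for B with coefficients in M
    (d2B : M ⊗[k] B ⊗[k] B →ₗ[k] M ⊗[k] B)
    -- the secondary Hochschild differentials ∂₁, ∂₂
    (p1 : M ⊗[k] A →ₗ[k] M)
    (hp1 : ∀ (m : M) (a : A), p1 (m ⊗ₜ[k] a) = op a • m - a • m)
    (p2 : M ⊗[k] A ⊗[k] A ⊗[k] B →ₗ[k] M ⊗[k] A)
    (hp2 : ∀ (m : M) (a b : A) (α : B),
      p2 (m ⊗ₜ[k] a ⊗ₜ[k] b ⊗ₜ[k] α) =
        (op (a * ε α) • m) ⊗ₜ[k] b - m ⊗ₜ[k] (a * ε α * b) + ((b * ε α) • m) ⊗ₜ[k] a)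
    -- the chain-level map m⊗α ↦ m⊗ε(α)
    (e : M ⊗[k] B →ₗ[k] M ⊗[k] A)
    (he : ∀ (m : M) (α : B), e (m ⊗ₜ[k] α) = m ⊗ₜ[k] ε α)
    -- the induced map ε_* : H₁(B,M) → H₁(A,M)
    (εs : ((M ⊗[k] B) ⧸ LinearMap.range d2B)
        →ₗ[k] (↥(LinearMap.ker d1) ⧸ (LinearMap.range d2).comap (LinearMap.ker d1).subtype))
    (hεs : ∀ (z : M ⊗[k] B) (hz : e z ∈ LinearMap.ker d1),
      εs (Submodule.Quotient.mk z) = Submodule.Quotient.mk ⟨e z, hz⟩)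
    -- the induced map Φ¹ : H₁(A,M) → H₁((A,B,ε);M)
    (Phi1 : (↥(LinearMap.ker d1) ⧸ (LinearMap.range d2).comap (LinearMap.ker d1).subtype)
        →ₗ[k] (↥(LinearMap.ker p1) ⧸ (LinearMap.range p2).comap (LinearMap.ker p1).subtype))
    (hPhi1 : ∀ (x : M ⊗[k] A) (hx : x ∈ LinearMap.ker d1) (hx' : x ∈ LinearMap.ker p1),
      Phi1 (Submodule.Quotient.mk ⟨x, hx⟩) = Submodule.Quotient.mk ⟨x, hx'⟩) :
    LinearMap.ker Phi1 = LinearMap.range εs := by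
  obtain rfl : d1 = p1 := TensorProduct.ext' fun m a => by rw [hd1, hp1]
  have hcycles := range_epsilonChain_le_ker_d1 hsymm hd1 he
  exact ker_eq_range_of_le_sup_range (fun z => hcycles (LinearMap.mem_range_self e z))
    εs (fun z => hεs z _) Phi1 (fun x => hPhi1 x x.2 x.2)
    (range_epsilonChain_le_range_secondaryD2 hp2 he)
    (range_secondaryD2_le_range_d2_sup_range_epsilonChain hcen hd2 hp2 he)

theorem secondaryHochschild_exact_at_H1A
    (k : Type*) [CommRing k]
    (A : Type*) [Ring A] [Algebra k A]
    (B : Type*) [CommRing B] [Algebra k B]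
    (ε : B →ₐ[k] A) (hcen : ∀ (b : B) (a : A), ε b * a = a * ε b)
    (M : Type*) [AddCommGroup M] [Module k M]
    [Module A M] [Module Aᵐᵒᵖ M] [SMulCommClass A Aᵐᵒᵖ M]
    [IsScalarTower k A M] [IsScalarTower k Aᵐᵒᵖ M]
    (hsymm : ∀ (b : B) (m : M), ε b • m = op (ε b) • m)
    -- the usual Hochschild differentials d₁, d₂ for A
    (d1 : M ⊗[k] A →ₗ[k] M)
    (hd1 : ∀ (m : M) (a : A), d1 (m ⊗ₜ[k] a) = op a • m - a • m)
    (d2 : M ⊗[k] A ⊗[k] A →ₗ[k] M ⊗[k] A)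
    (hd2 : ∀ (m : M) (a b : A),
      d2 (m ⊗ₜ[k] a ⊗ₜ[k] b) =
        (op a • m) ⊗ₜ[k] b - m ⊗ₜ[k] (a * b) + (b • m) ⊗ₜ[k] a)
    -- the Hochschild differential d₂^B for B with coefficients in M
    (d2B : M ⊗[k] B ⊗[k] B →ₗ[k] M ⊗[k] B)
    (hd2B : ∀ (m : M) (α β : B),
      d2B (m ⊗ₜ[k] α ⊗ₜ[k] β) =
        (op (ε α) • m) ⊗ₜ[k] β - m ⊗ₜ[k] (α * β) + (ε β • m) ⊗ₜ[k] α)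
    -- the secondary Hochschild differentials ∂₁, ∂₂
    (p1 : M ⊗[k] A →ₗ[k] M)
    (hp1 : ∀ (m : M) (a : A), p1 (m ⊗ₜ[k] a) = op a • m - a • m)
    (p2 : M ⊗[k] A ⊗[k] A ⊗[k] B →ₗ[k] M ⊗[k] A)
    (hp2 : ∀ (m : M) (a b : A) (α : B),
      p2 (m ⊗ₜ[k] a ⊗ₜ[k] b ⊗ₜ[k] α) =
        (op (a * ε α) • m) ⊗ₜ[k] b - m ⊗ₜ[k] (a * ε α * b) + ((b * ε α) • m) ⊗ₜ[k] a)
    -- the chain-level map m⊗α ↦ m⊗ε(α)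
    (e : M ⊗[k] B →ₗ[k] M ⊗[k] A)
    (he : ∀ (m : M) (α : B), e (m ⊗ₜ[k] α) = m ⊗ₜ[k] ε α)
    -- the induced map ε_* : H₁(B,M) → H₁(A,M)
    (εs : ((M ⊗[k] B) ⧸ LinearMap.range d2B)
        →ₗ[k] (↥(LinearMap.ker d1) ⧸ (LinearMap.range d2).comap (LinearMap.ker d1).subtype))
    (hεs : ∀ (z : M ⊗[k] B) (hz : e z ∈ LinearMap.ker d1),
      εs (Submodule.Quotient.mk z) = Submodule.Quotient.mk ⟨e z, hz⟩)
    -- the induced map Φ¹ : H₁(A,M) → H₁((A,B,ε);M)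
    (Phi1 : (↥(LinearMap.ker d1) ⧸ (LinearMap.range d2).comap (LinearMap.ker d1).subtype)
        →ₗ[k] (↥(LinearMap.ker p1) ⧸ (LinearMap.range p2).comap (LinearMap.ker p1).subtype))
    (hPhi1 : ∀ (x : M ⊗[k] A) (hx : x ∈ LinearMap.ker d1) (hx' : x ∈ LinearMap.ker p1),
      Phi1 (Submodule.Quotient.mk ⟨x, hx⟩) = Submodule.Quotient.mk ⟨x, hx'⟩) :
    LinearMap.ker Phi1 = LinearMap.range εs :=
  secondaryHochschild_exact_at_H1A_general k A B ε hcen M hsymm d1 hd1 d2 hd2 d2B p1 hp1 p2 hp2 e he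
    εs hεs Phi1 hPhi1
end

section
/- Let A be commutative, M an A-symmetric A-bimodule, and consider the triple (A,A,id). Then H₁((A,A,id);M) = 0; equivalently, every element of M⊗A lies in the image of the map ∂₂ : M⊗A⊗A⊗A → M⊗A given by ∂₂(m⊗a⊗b⊗α) = maα⊗b − m⊗aαb + bαm⊗a. -/
/-!
STATEMENT 15: Let A be commutative, M an A-symmetric A-bimodule, and consider the
triple (A,A,id).  Then H₁((A,A,id);M) = 0; equivalently, every element of M⊗A lies
in the image of ∂₂ : M⊗A⊗A⊗A → M⊗A, ∂₂(m⊗a⊗b⊗α) = maα⊗b − m⊗aαb + bαm⊗a.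

Here k is a commutative ring, the A-bimodule M is A-symmetric (the right action via
Aᵐᵒᵖ coincides with the left one, i.e. `IsCentralScalar A M`), and k acts centrally.
-/

open TensorProduct MulOpposite

set_option maxSynthPendingDepth 8

theorem secondaryHochschild_H1_of_self_triple_eq_zero
    (k : Type*) [CommRing k]
    (A : Type*) [CommRing A] [Algebra k A]
    (M : Type*) [AddCommGroup M] [Module k M]
    [Module A M] [Module Aᵐᵒᵖ M] [IsCentralScalar A M]
    [IsScalarTower k A M]
    -- the secondary Hochschild differential ∂₂ of the triple (A,A,id)
    (p2 : M ⊗[k] A ⊗[k] A ⊗[k] A →ₗ[k] M ⊗[k] A)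
    (hp2 : ∀ (m : M) (a b α : A),
      p2 (m ⊗ₜ[k] a ⊗ₜ[k] b ⊗ₜ[k] α) =
        (op (a * α) • m) ⊗ₜ[k] b - m ⊗ₜ[k] (a * α * b) + ((b * α) • m) ⊗ₜ[k] a) :
    ∀ x : M ⊗[k] A, x ∈ LinearMap.range p2 := by
  intro x
  induction x using TensorProduct.induction_on with
  | zero => exact zero_mem _
  | tmul m a =>
      refine ⟨(2 : ℤ) • (m ⊗ₜ[k] 1 ⊗ₜ[k] a ⊗ₜ[k] 1) - m ⊗ₜ[k] 1 ⊗ₜ[k] 1 ⊗ₜ[k] a, ?_⟩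
      rw [map_sub, map_zsmul, hp2, hp2]
      simp only [one_mul, mul_one, op_smul_eq_smul, one_smul]
      abel
  | add x y hx hy => exact add_mem hx hy
end

section
/- Let A be commutative, M an A-symmetric A-bimodule, and consider the triple (A,A,id). Then H₂((A,A,id);M) = 0; equivalently, ker ∂₂ = im ∂₃, where ∂₂(m⊗a⊗b⊗α) = maα⊗b − m⊗aαb + bαm⊗a and ∂₃(m⊗a⊗b⊗c⊗α⊗β⊗γ) = maαβ⊗b⊗c⊗γ − m⊗aαb⊗c⊗βγ + m⊗a⊗bγc⊗αβ − cβγm⊗a⊗b⊗α. -/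
/-!
The `k`-linear map `s (m ⊗ c) = 2 • (c • m) ⊗ 1 ⊗ 1 ⊗ 1 - m ⊗ 1 ⊗ 1 ⊗ c` is a section of `∂₂`,
and for every 2-chain `x` the difference `x - s (∂₂ x)` is a `∂₃`-boundary: on a pure tensor a
nine-term preimage can be written down. Hence every 2-cycle `z = z - s (∂₂ z)` is a boundary.
The reverse inclusion is `∂₂ ∘ ∂₃ = 0`, a direct computation using that `M` is `A`-symmetric.
-/

open TensorProduct MulOpposite

set_option maxSynthPendingDepth 8

theorem LinearMap.ker_le_range_of_forall_sub_mem_range {R N P Q : Type*} [Ring R]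
    [AddCommGroup N] [Module R N] [AddCommGroup P] [Module R P] [AddCommGroup Q] [Module R Q]
    {f : N →ₗ[R] P} {g : Q →ₗ[R] N} (s : P →ₗ[R] N) (h : ∀ x, x - s (f x) ∈ range g) :
    ker f ≤ range g := fun x hx => by
  simpa [mem_ker.mp hx] using h x

namespace SecondaryHochschild

section Splitting

variable (k A M : Type*) [CommRing k] [CommRing A] [Algebra k A] [AddCommGroup M] [Module k M]
  [Module A M] [IsScalarTower k A M]

noncomputable def splitting : M ⊗[k] A →ₗ[k] M ⊗[k] A ⊗[k] A ⊗[k] A :=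
  TensorProduct.lift <| LinearMap.mk₂ k
    (fun m c => (2 : ℤ) • ((c • m) ⊗ₜ[k] (1 : A) ⊗ₜ[k] (1 : A) ⊗ₜ[k] (1 : A))
      - m ⊗ₜ[k] (1 : A) ⊗ₜ[k] (1 : A) ⊗ₜ[k] c)
    (fun m₁ m₂ c => by simp only [smul_add, add_tmul]; abel)
    (fun t m c => by simp only [smul_comm c t m, smul_tmul', smul_comm (2 : ℤ) t, smul_sub])
    (fun m c₁ c₂ => by simp only [add_smul, add_tmul, tmul_add]; abel)
    (fun t m c => by simp only [smul_assoc, smul_tmul', tmul_smul, smul_comm (2 : ℤ) t, smul_sub])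

variable {k A M}

@[simp]
theorem splitting_tmul (m : M) (c : A) :
    splitting k A M (m ⊗ₜ[k] c) =
      (2 : ℤ) • ((c • m) ⊗ₜ[k] (1 : A) ⊗ₜ[k] (1 : A) ⊗ₜ[k] (1 : A))
        - m ⊗ₜ[k] (1 : A) ⊗ₜ[k] (1 : A) ⊗ₜ[k] c :=
  rfl

end Splitting

variable {k A M : Type*} [CommRing k] [CommRing A] [Algebra k A] [AddCommGroup M] [Module k M]
  [Module A M] [Module Aᵐᵒᵖ M]

def IsDifferential₂ (p2 : M ⊗[k] A ⊗[k] A ⊗[k] A →ₗ[k] M ⊗[k] A) : Prop :=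
  ∀ (m : M) (a b α : A), p2 (m ⊗ₜ[k] a ⊗ₜ[k] b ⊗ₜ[k] α) =
    (op (a * α) • m) ⊗ₜ[k] b - m ⊗ₜ[k] (a * α * b) + ((b * α) • m) ⊗ₜ[k] a

def IsDifferential₃ (p3 : M ⊗[k] A ⊗[k] A ⊗[k] A ⊗[k] A ⊗[k] A ⊗[k] A →ₗ[k] M ⊗[k] A ⊗[k] A ⊗[k] A) :
    Prop :=
  ∀ (m : M) (a b c α β γ : A), p3 (m ⊗ₜ[k] a ⊗ₜ[k] b ⊗ₜ[k] c ⊗ₜ[k] α ⊗ₜ[k] β ⊗ₜ[k] γ) =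
    (op (a * (α * β)) • m) ⊗ₜ[k] b ⊗ₜ[k] c ⊗ₜ[k] γ
      - m ⊗ₜ[k] (a * α * b) ⊗ₜ[k] c ⊗ₜ[k] (β * γ)
      + m ⊗ₜ[k] a ⊗ₜ[k] (b * γ * c) ⊗ₜ[k] (α * β)
      - ((c * (β * γ)) • m) ⊗ₜ[k] a ⊗ₜ[k] b ⊗ₜ[k] α

variable [IsCentralScalar A M] {p2 : M ⊗[k] A ⊗[k] A ⊗[k] A →ₗ[k] M ⊗[k] A}
  {p3 : M ⊗[k] A ⊗[k] A ⊗[k] A ⊗[k] A ⊗[k] A ⊗[k] A →ₗ[k] M ⊗[k] A ⊗[k] A ⊗[k] A}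

theorem IsDifferential₂.comp_eq_zero (hp2 : IsDifferential₂ p2) (hp3 : IsDifferential₃ p3) : p2 ∘ₗ p3 = 0 := by
  unfold IsDifferential₂ at hp2
  unfold IsDifferential₃ at hp3
  ext m a b c α β γ
  simp only [AlgebraTensorModule.curry_apply, LinearMap.coe_restrictScalars, curry_apply,
    LinearMap.comp_apply, LinearMap.zero_apply, hp3, map_sub, map_add, hp2, op_smul_eq_smul,
    smul_smul]
  ring_nf
  abel

variable [IsScalarTower k A M]

theorem tmul_sub_splitting_mem_range (hp2 : IsDifferential₂ p2) (hp3 : IsDifferential₃ p3) (m : M) (a b α : A) :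
    m ⊗ₜ[k] a ⊗ₜ[k] b ⊗ₜ[k] α - splitting k A M (p2 (m ⊗ₜ[k] a ⊗ₜ[k] b ⊗ₜ[k] α)) ∈
      LinearMap.range p3 := by
  unfold IsDifferential₂ at hp2
  unfold IsDifferential₃ at hp3
  refine ⟨m ⊗ₜ[k] (1 : A) ⊗ₜ[k] (1 : A) ⊗ₜ[k] (1 : A) ⊗ₜ[k] (1 : A) ⊗ₜ[k] a ⊗ₜ[k] (α * b)
      - m ⊗ₜ[k] (1 : A) ⊗ₜ[k] (1 : A) ⊗ₜ[k] (1 : A) ⊗ₜ[k] a ⊗ₜ[k] b ⊗ₜ[k] α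
      - m ⊗ₜ[k] (1 : A) ⊗ₜ[k] α ⊗ₜ[k] (1 : A) ⊗ₜ[k] (1 : A) ⊗ₜ[k] a ⊗ₜ[k] b
      + m ⊗ₜ[k] (1 : A) ⊗ₜ[k] α ⊗ₜ[k] (1 : A) ⊗ₜ[k] (1 : A) ⊗ₜ[k] (a * b) ⊗ₜ[k] (1 : A)
      + m ⊗ₜ[k] a ⊗ₜ[k] (1 : A) ⊗ₜ[k] (1 : A) ⊗ₜ[k] (1 : A) ⊗ₜ[k] α ⊗ₜ[k] b
      + m ⊗ₜ[k] a ⊗ₜ[k] (1 : A) ⊗ₜ[k] (1 : A) ⊗ₜ[k] (α * b) ⊗ₜ[k] (1 : A) ⊗ₜ[k] (1 : A)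
      - m ⊗ₜ[k] b ⊗ₜ[k] α ⊗ₜ[k] (1 : A) ⊗ₜ[k] a ⊗ₜ[k] (1 : A) ⊗ₜ[k] (1 : A)
      - (a • m) ⊗ₜ[k] (1 : A) ⊗ₜ[k] (1 : A) ⊗ₜ[k] (1 : A) ⊗ₜ[k] α ⊗ₜ[k] b ⊗ₜ[k] (1 : A)
      - ((α * b) • m) ⊗ₜ[k] (1 : A) ⊗ₜ[k] (1 : A) ⊗ₜ[k] (1 : A) ⊗ₜ[k] a ⊗ₜ[k] (1 : A)
        ⊗ₜ[k] (1 : A), ?_⟩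
  simp only [hp2, map_sub, map_add, hp3, splitting_tmul, op_smul_eq_smul, smul_smul]
  ring_nf
  simp only [one_smul]
  abel

theorem sub_splitting_mem_range (hp2 : IsDifferential₂ p2) (hp3 : IsDifferential₃ p3) (x : M ⊗[k] A ⊗[k] A ⊗[k] A) :
    x - splitting k A M (p2 x) ∈ LinearMap.range p3 := by
  suffices LinearMap.range (LinearMap.id - splitting k A M ∘ₗ p2) ≤ LinearMap.range p3 from
    this ⟨x, rfl⟩
  rw [← Submodule.ker_mkQ (LinearMap.range p3), LinearMap.range_le_ker_iff]
  ext m a b α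
  simp only [AlgebraTensorModule.curry_apply, LinearMap.coe_restrictScalars, curry_apply,
    LinearMap.comp_apply, LinearMap.sub_apply, LinearMap.id_apply, Submodule.mkQ_apply,
    LinearMap.zero_apply, Submodule.Quotient.mk_eq_zero]
  exact tmul_sub_splitting_mem_range hp2 hp3 m a b α

end SecondaryHochschild

open SecondaryHochschild in
theorem secondaryHochschild_H2_of_self_triple_eq_zero
    (k : Type*) [CommRing k]
    (A : Type*) [CommRing A] [Algebra k A]
    (M : Type*) [AddCommGroup M] [Module k M]
    [Module A M] [Module Aᵐᵒᵖ M] [IsCentralScalar A M]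
    [IsScalarTower k A M]
    -- the secondary Hochschild differentials ∂₂, ∂₃ of the triple (A,A,id)
    (p2 : M ⊗[k] A ⊗[k] A ⊗[k] A →ₗ[k] M ⊗[k] A)
    (hp2 : ∀ (m : M) (a b α : A),
      p2 (m ⊗ₜ[k] a ⊗ₜ[k] b ⊗ₜ[k] α) =
        (op (a * α) • m) ⊗ₜ[k] b - m ⊗ₜ[k] (a * α * b) + ((b * α) • m) ⊗ₜ[k] a)
    (p3 : M ⊗[k] A ⊗[k] A ⊗[k] A ⊗[k] A ⊗[k] A ⊗[k] A →ₗ[k] M ⊗[k] A ⊗[k] A ⊗[k] A)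
    (hp3 : ∀ (m : M) (a b c α β γ : A),
      p3 (m ⊗ₜ[k] a ⊗ₜ[k] b ⊗ₜ[k] c ⊗ₜ[k] α ⊗ₜ[k] β ⊗ₜ[k] γ) =
        (op (a * (α * β)) • m) ⊗ₜ[k] b ⊗ₜ[k] c ⊗ₜ[k] γ
        - m ⊗ₜ[k] (a * α * b) ⊗ₜ[k] c ⊗ₜ[k] (β * γ)
        + m ⊗ₜ[k] a ⊗ₜ[k] (b * γ * c) ⊗ₜ[k] (α * β)
        - ((c * (β * γ)) • m) ⊗ₜ[k] a ⊗ₜ[k] b ⊗ₜ[k] α) :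
    LinearMap.ker p2 = LinearMap.range p3 :=
  le_antisymm
    (LinearMap.ker_le_range_of_forall_sub_mem_range (splitting k A M)
      (sub_splitting_mem_range hp2 hp3))
    (LinearMap.range_le_ker_iff.mpr (IsDifferential₂.comp_eq_zero hp2 hp3))
end

section
/- Consider the triple (k,B,ε), where ε : B → k is a k-algebra homomorphism, and let M be a k-module regarded as a B-symmetric bimodule via ε. Then H₁((k,B,ε);M) = 0 and there are k-module isomorphisms H₂((k,B,ε);M) ≅ H₁(B,M) ≅ M⊗_B Ω¹_{B/k}, where M is a B-module via b·m = ε(b)m and Ω¹_{B/k} is the module of Kähler differentials of B over k. -/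
/-!
Absorbing the scalar factors `k` identifies `C₂` with `M ⊗ B` and `∂₂` with the augmentation
`m ⊗ α ↦ ε(α) m`, which is split surjective by `m ↦ m ⊗ 1`; hence `H₁((k,B,ε);M) = 0`.
Under the same identification `∂₃` factors through `d₂^B`; conversely `∂₃` of
`m ⊗ 1 ⊗ 1 ⊗ 1 ⊗ 1 ⊗ α ⊗ β` becomes `d₂^B (m ⊗ α ⊗ β) - ε(αβ) m ⊗ 1`, whose correction term
vanishes on `∂₂`-cycles. As `m ⊗ 1 = d₂^B (m ⊗ 1 ⊗ 1)` is a boundary, `ker ∂₂` maps onto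
`H₁(B,M)` with kernel exactly `im ∂₃`.

Finally `m ⊗ α ↦ m ⊗ dα` identifies `H₁(B,M)` with `M ⊗_B Ω¹_{B/k}`: `d₂^B` encodes precisely the
Leibniz rule, and the inverse comes from the universal property of `Ω¹_{B/k}`, each `m` giving the
derivation `α ↦ [m ⊗ α]` into `H₁(B,M)`, made a `B`-module through `ε`.
-/

open TensorProduct

set_option maxSynthPendingDepth 8

noncomputable def Submodule.quotientComapEquivOfSupEqTop {R D K : Type*} [CommRing R]
    [AddCommGroup D] [Module R D] [AddCommGroup K] [Module R K]
    (f : K →ₗ[R] D) (S : Submodule R D) (h : LinearMap.range f ⊔ S = ⊤) :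
    (K ⧸ S.comap f) ≃ₗ[R] D ⧸ S :=
  (Submodule.quotEquivOfEq _ _ (by rw [LinearMap.ker_comp, Submodule.ker_mkQ])).trans
    ((S.mkQ ∘ₗ f).quotKerEquivOfSurjective <| by
      rw [← LinearMap.range_eq_top, LinearMap.range_comp, Submodule.map_mkQ_eq_top, sup_comm, h])

namespace SecondaryHochschild

section Complex

variable {k B : Type*} [CommRing k] [CommRing B] [Algebra k B] (ε : B →ₐ[k] k)
  {M : Type*} [AddCommGroup M] [Module k M]

def IsSecondaryD₂ (p2 : M ⊗[k] k ⊗[k] k ⊗[k] B →ₗ[k] M ⊗[k] k) : Prop :=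
  ∀ (m : M) (a b : k) (α : B), p2 (m ⊗ₜ a ⊗ₜ b ⊗ₜ α) =
    ((a * ε α) • m) ⊗ₜ b - m ⊗ₜ (a * ε α * b) + ((b * ε α) • m) ⊗ₜ a

def IsSecondaryD₃
    (p3 : M ⊗[k] k ⊗[k] k ⊗[k] k ⊗[k] B ⊗[k] B ⊗[k] B →ₗ[k] M ⊗[k] k ⊗[k] k ⊗[k] B) : Prop :=
  ∀ (m : M) (a b c : k) (α β γ : B),
    p3 (m ⊗ₜ a ⊗ₜ b ⊗ₜ c ⊗ₜ α ⊗ₜ β ⊗ₜ γ) =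
      ((a * ε (α * β)) • m) ⊗ₜ b ⊗ₜ c ⊗ₜ γ - m ⊗ₜ (a * ε α * b) ⊗ₜ c ⊗ₜ (β * γ)
        + m ⊗ₜ a ⊗ₜ (b * ε γ * c) ⊗ₜ (α * β) - ((c * ε (β * γ)) • m) ⊗ₜ a ⊗ₜ b ⊗ₜ α

def IsHochschildD₂ (d2B : M ⊗[k] B ⊗[k] B →ₗ[k] M ⊗[k] B) : Prop :=
  ∀ (m : M) (α β : B), d2B (m ⊗ₜ α ⊗ₜ β) = (ε α • m) ⊗ₜ β - m ⊗ₜ (α * β) + (ε β • m) ⊗ₜ α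

variable (k B M)

noncomputable def absorbScalars₂ : M ⊗[k] k ⊗[k] k ⊗[k] B ≃ₗ[k] M ⊗[k] B :=
  congr ((TensorProduct.rid k (M ⊗[k] k)).trans (TensorProduct.rid k M)) (LinearEquiv.refl k B)

noncomputable def absorbScalars₃ :
    M ⊗[k] k ⊗[k] k ⊗[k] k ⊗[k] B ⊗[k] B ⊗[k] B ≃ₗ[k] M ⊗[k] B ⊗[k] B ⊗[k] B :=
  congr (congr (congr ((TensorProduct.rid k (M ⊗[k] k ⊗[k] k)).trans
    ((TensorProduct.rid k (M ⊗[k] k)).trans (TensorProduct.rid k M)))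
      (LinearEquiv.refl k B)) (LinearEquiv.refl k B)) (LinearEquiv.refl k B)

noncomputable def augmentation : M ⊗[k] B →ₗ[k] M :=
  TensorProduct.rid k M ∘ₗ ε.toLinearMap.lTensor M

noncomputable def outerFaces : M ⊗[k] B ⊗[k] B ⊗[k] B →ₗ[k] M ⊗[k] B ⊗[k] B :=
  (TensorProduct.assoc k M B B).symm.toLinearMap ∘ₗ (augmentation k B ε M).rTensor (B ⊗[k] B) ∘ₗ
      (TensorProduct.assoc k (M ⊗[k] B) B B).toLinearMap
    - TensorProduct.rid k (M ⊗[k] B ⊗[k] B) ∘ₗ ε.toLinearMap.lTensor (M ⊗[k] B ⊗[k] B)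

variable {k B M}

@[simp]
theorem absorbScalars₂_tmul (m : M) (a b : k) (α : B) :
    absorbScalars₂ k B M (m ⊗ₜ a ⊗ₜ b ⊗ₜ α) = ((a * b) • m) ⊗ₜ α := by
  simp [absorbScalars₂, smul_smul, mul_comm]

@[simp]
theorem absorbScalars₃_tmul (m : M) (a b c : k) (α β γ : B) :
    absorbScalars₃ k B M (m ⊗ₜ a ⊗ₜ b ⊗ₜ c ⊗ₜ α ⊗ₜ β ⊗ₜ γ) =
      ((a * b * c) • m) ⊗ₜ α ⊗ₜ β ⊗ₜ γ := by
  simp [absorbScalars₃, smul_smul, mul_comm, mul_left_comm]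

@[simp]
theorem augmentation_tmul (m : M) (α : B) : augmentation k B ε M (m ⊗ₜ α) = ε α • m := by
  simp [augmentation]

@[simp]
theorem outerFaces_tmul (m : M) (α β γ : B) :
    outerFaces k B ε M (m ⊗ₜ α ⊗ₜ β ⊗ₜ γ) = (ε α • m) ⊗ₜ β ⊗ₜ γ - (ε γ • m) ⊗ₜ α ⊗ₜ β := by
  simp [outerFaces, smul_tmul']

variable {ε}

theorem secondaryD₂_eq {p2 : M ⊗[k] k ⊗[k] k ⊗[k] B →ₗ[k] M ⊗[k] k} (hp2 : IsSecondaryD₂ ε p2) :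
    p2 = (TensorProduct.rid k M).symm.toLinearMap ∘ₗ augmentation k B ε M ∘ₗ
      (absorbScalars₂ k B M).toLinearMap := by
  ext m α
  have hswap : (ε α • m) ⊗ₜ[k] (1 : k) = m ⊗ₜ ε α := by rw [smul_tmul, smul_eq_mul, mul_one]
  simp only [AlgebraTensorModule.curry_apply, curry_apply, LinearMap.coe_restrictScalars,
    LinearMap.comp_apply, LinearEquiv.coe_coe]
  rw [hp2 m 1 1 α]
  simp only [absorbScalars₂_tmul, augmentation_tmul, rid_symm_apply, one_mul, mul_one, one_smul,
    hswap, sub_self, zero_add]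

theorem augmentation_surjective : Function.Surjective (augmentation k B ε M) :=
  fun m => ⟨m ⊗ₜ 1, by rw [augmentation_tmul, map_one, one_smul]⟩

theorem secondaryD₂_surjective {p2 : M ⊗[k] k ⊗[k] k ⊗[k] B →ₗ[k] M ⊗[k] k}
    (hp2 : IsSecondaryD₂ ε p2) : Function.Surjective p2 := by
  rw [secondaryD₂_eq hp2]
  exact (TensorProduct.rid k M).symm.surjective.comp
    (augmentation_surjective.comp (absorbScalars₂ k B M).surjective)

theorem absorbScalars₂_comp_secondaryD₃
    {p3 : M ⊗[k] k ⊗[k] k ⊗[k] k ⊗[k] B ⊗[k] B ⊗[k] B →ₗ[k] M ⊗[k] k ⊗[k] k ⊗[k] B}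
    (hp3 : IsSecondaryD₃ ε p3) {d2B : M ⊗[k] B ⊗[k] B →ₗ[k] M ⊗[k] B}
    (hd2B : IsHochschildD₂ ε d2B) :
    (absorbScalars₂ k B M).toLinearMap ∘ₗ p3 =
      d2B ∘ₗ outerFaces k B ε M ∘ₗ (absorbScalars₃ k B M).toLinearMap := by
  ext m α β γ
  simp only [AlgebraTensorModule.curry_apply, curry_apply, LinearMap.coe_restrictScalars,
    LinearMap.comp_apply, LinearEquiv.coe_coe]
  rw [hp3 m 1 1 1 α β γ, absorbScalars₃_tmul, outerFaces_tmul]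
  simp only [map_sub, map_add, absorbScalars₂_tmul, hd2B _ _ _, map_mul, one_mul, mul_one, one_smul]
  simp only [← smul_tmul']
  module

theorem hochschildD₂_comp_outerFaces_comp_rTensor {d2B : M ⊗[k] B ⊗[k] B →ₗ[k] M ⊗[k] B}
    (hd2B : IsHochschildD₂ ε d2B) :
    d2B ∘ₗ outerFaces k B ε M ∘ₗ (((TensorProduct.mk k M B).flip 1).rTensor B).rTensor B =
      d2B - (TensorProduct.mk k M B).flip 1 ∘ₗ augmentation k B ε M ∘ₗ d2B := by
  ext m α β
  simp only [AlgebraTensorModule.curry_apply, curry_apply, LinearMap.coe_restrictScalars,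
    LinearMap.comp_apply, LinearMap.sub_apply, LinearMap.rTensor_tmul, LinearMap.flip_apply,
    mk_apply, outerFaces_tmul, map_sub, map_add, hd2B _ _ _, augmentation_tmul, map_mul, map_one,
    one_smul, one_mul]
  simp only [← smul_tmul']
  module

theorem tmul_one_mem_range_hochschildD₂ {d2B : M ⊗[k] B ⊗[k] B →ₗ[k] M ⊗[k] B}
    (hd2B : IsHochschildD₂ ε d2B) (m : M) : m ⊗ₜ (1 : B) ∈ LinearMap.range d2B :=
  ⟨m ⊗ₜ 1 ⊗ₜ 1, by rw [hd2B, map_one, one_smul, mul_one, sub_add_cancel]⟩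

theorem mem_range_secondaryD₃_iff {p2 : M ⊗[k] k ⊗[k] k ⊗[k] B →ₗ[k] M ⊗[k] k}
    (hp2 : IsSecondaryD₂ ε p2)
    {p3 : M ⊗[k] k ⊗[k] k ⊗[k] k ⊗[k] B ⊗[k] B ⊗[k] B →ₗ[k] M ⊗[k] k ⊗[k] k ⊗[k] B}
    (hp3 : IsSecondaryD₃ ε p3) {d2B : M ⊗[k] B ⊗[k] B →ₗ[k] M ⊗[k] B}
    (hd2B : IsHochschildD₂ ε d2B) {x : M ⊗[k] k ⊗[k] k ⊗[k] B} (hx : p2 x = 0) :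
    x ∈ LinearMap.range p3 ↔ absorbScalars₂ k B M x ∈ LinearMap.range d2B := by
  have hcomm w := LinearMap.congr_fun (absorbScalars₂_comp_secondaryD₃ hp3 hd2B) w
  simp only [LinearMap.comp_apply, LinearEquiv.coe_coe] at hcomm
  constructor
  · rintro ⟨w, rfl⟩
    exact ⟨outerFaces k B ε M (absorbScalars₃ k B M w), (hcomm w).symm⟩
  · rintro ⟨z, hz⟩
    have hx' : augmentation k B ε M (absorbScalars₂ k B M x) = 0 := by
      rwa [secondaryD₂_eq hp2, LinearMap.comp_apply, LinearEquiv.coe_coe,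
        LinearEquiv.map_eq_zero_iff] at hx
    have hsplit := LinearMap.congr_fun (hochschildD₂_comp_outerFaces_comp_rTensor hd2B) z
    simp only [LinearMap.comp_apply, LinearMap.sub_apply] at hsplit
    refine ⟨(absorbScalars₃ k B M).symm ((((TensorProduct.mk k M B).flip 1).rTensor B).rTensor B z),
      (absorbScalars₂ k B M).injective ?_⟩
    rw [hcomm, LinearEquiv.apply_symm_apply, hsplit, hz, hx', map_zero, sub_zero]

theorem range_absorbScalars₂_comp_subtype_sup_eq_top
    {p2 : M ⊗[k] k ⊗[k] k ⊗[k] B →ₗ[k] M ⊗[k] k} (hp2 : IsSecondaryD₂ ε p2)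
    {d2B : M ⊗[k] B ⊗[k] B →ₗ[k] M ⊗[k] B} (hd2B : IsHochschildD₂ ε d2B) :
    LinearMap.range ((absorbScalars₂ k B M).toLinearMap ∘ₗ (LinearMap.ker p2).subtype)
      ⊔ LinearMap.range d2B = ⊤ := by
  refine eq_top_iff.2 fun y _ => ?_
  have hy : y - augmentation k B ε M y ⊗ₜ 1 ∈
      LinearMap.range ((absorbScalars₂ k B M).toLinearMap ∘ₗ (LinearMap.ker p2).subtype) := by
    refine ⟨⟨(absorbScalars₂ k B M).symm (y - augmentation k B ε M y ⊗ₜ 1), ?_⟩, by simp⟩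
    simp [secondaryD₂_eq hp2]
  simpa using
    Submodule.add_mem_sup hy (tmul_one_mem_range_hochschildD₂ hd2B (augmentation k B ε M y))

end Complex

section Kaehler

variable (k B : Type*) [CommRing k] [CommRing B] [Algebra k B]
  (M : Type*) [AddCommGroup M] [Module k M] [Module B M] [SMulCommClass B k M]
  [IsScalarTower k B M]

noncomputable def tensorKaehlerD : M ⊗[k] B →ₗ[k] M ⊗[B] Ω[B⁄k] :=
  TensorProduct.lift <| ((TensorProduct.mk B M Ω[B⁄k]).restrictScalars₁₂ k k).compl₂
    (KaehlerDifferential.D k B).toLinearMap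

variable {k B M}

@[simp]
theorem tensorKaehlerD_tmul (m : M) (α : B) :
    tensorKaehlerD k B M (m ⊗ₜ α) = m ⊗ₜ KaehlerDifferential.D k B α :=
  rfl

theorem tensorKaehlerD_surjective : Function.Surjective (tensorKaehlerD k B M) := by
  rw [← LinearMap.range_eq_top, eq_top_iff]
  rintro x -
  induction x using TensorProduct.induction_on with
  | zero => exact zero_mem _
  | add x y hx hy => exact add_mem hx hy
  | tmul m ω =>
    have hω : ω ∈ Submodule.span B (Set.range (KaehlerDifferential.D k B)) := by
      rw [KaehlerDifferential.span_range_derivation]; trivial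
    induction hω using Submodule.span_induction generalizing m with
    | mem ω h =>
      obtain ⟨α, rfl⟩ := h
      exact ⟨m ⊗ₜ α, rfl⟩
    | zero => rw [tmul_zero]; exact zero_mem _
    | add ω ω' _ _ hω hω' => rw [tmul_add]; exact add_mem (hω m) (hω' m)
    | smul b ω _ hω => rw [← smul_tmul]; exact hω (b • m)

variable {N : Type*} [AddCommGroup N] [Module k N] [Module B N] [IsScalarTower k B N]

theorem exists_comp_tensorKaehlerD_eq (g : M ⊗[k] B →ₗ[k] N)
    (hg_smul : ∀ (b : B) (m : M) (α : B), g ((b • m) ⊗ₜ α) = b • g (m ⊗ₜ α))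
    (hg_leibniz : ∀ (m : M) (α β : B), g (m ⊗ₜ (α * β)) = α • g (m ⊗ₜ β) + β • g (m ⊗ₜ α)) :
    ∃ ψ : M ⊗[B] Ω[B⁄k] →ₗ[B] N, ∀ x, ψ (tensorKaehlerD k B M x) = g x := by
  let δ : M →ₗ[B] Derivation k B N :=
    { toFun m := Derivation.mk' (TensorProduct.curry g m) (hg_leibniz m)
      map_add' m m' := by ext α; exact (congrArg g (add_tmul m m' α)).trans (map_add g _ _)
      map_smul' b m := by ext α; exact hg_smul b m α }
  refine ⟨TensorProduct.lift
    ((KaehlerDifferential.linearMapEquivDerivation k B).symm.toLinearMap ∘ₗ δ), fun x => ?_⟩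
  induction x using TensorProduct.induction_on with
  | zero => simp
  | add x y hx hy => simp only [map_add, hx, hy]
  | tmul m α =>
    show (δ m).liftKaehlerDifferential (KaehlerDifferential.D k B α) = _
    rw [Derivation.liftKaehlerDifferential_comp_D]
    rfl

theorem ker_tensorKaehlerD_le (g : M ⊗[k] B →ₗ[k] N)
    (hg_smul : ∀ (b : B) (m : M) (α : B), g ((b • m) ⊗ₜ α) = b • g (m ⊗ₜ α))
    (hg_leibniz : ∀ (m : M) (α β : B), g (m ⊗ₜ (α * β)) = α • g (m ⊗ₜ β) + β • g (m ⊗ₜ α)) :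
    LinearMap.ker (tensorKaehlerD k B M) ≤ LinearMap.ker g := by
  obtain ⟨ψ, hψ⟩ := exists_comp_tensorKaehlerD_eq g hg_smul hg_leibniz
  intro x hx
  rw [LinearMap.mem_ker, ← hψ, LinearMap.mem_ker.1 hx, map_zero]

variable {ε : B →ₐ[k] k} {d2B : M ⊗[k] B ⊗[k] B →ₗ[k] M ⊗[k] B}

theorem range_hochschildD₂_le_ker_tensorKaehlerD (hBM : ∀ (b : B) (m : M), b • m = ε b • m)
    (hd2B : IsHochschildD₂ ε d2B) :
    LinearMap.range d2B ≤ LinearMap.ker (tensorKaehlerD k B M) := by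
  rw [LinearMap.range_le_ker_iff]
  ext m α β
  simp only [AlgebraTensorModule.curry_apply, curry_apply, LinearMap.coe_restrictScalars,
    LinearMap.comp_apply, LinearMap.zero_apply, hd2B m α β, map_add, map_sub, tensorKaehlerD_tmul,
    Derivation.leibniz, tmul_add, ← smul_tmul, hBM]
  abel

theorem ker_tensorKaehlerD_le_range_hochschildD₂ (hBM : ∀ (b : B) (m : M), b • m = ε b • m)
    (hd2B : IsHochschildD₂ ε d2B) :
    LinearMap.ker (tensorKaehlerD k B M) ≤ LinearMap.range d2B := by
  let _ : Module B (M ⊗[k] B ⧸ LinearMap.range d2B) := Module.compHom _ ε.toRingHom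
  have : IsScalarTower k B (M ⊗[k] B ⧸ LinearMap.range d2B) :=
    ⟨fun c b q => show ε (c • b) • q = c • ε b • q by rw [map_smul, smul_eq_mul, mul_smul]⟩
  have hleibniz (m : M) (α β : B) : (LinearMap.range d2B).mkQ (m ⊗ₜ (α * β)) =
      ε α • (LinearMap.range d2B).mkQ (m ⊗ₜ β) + ε β • (LinearMap.range d2B).mkQ (m ⊗ₜ α) := by
    rw [← map_smul, ← map_smul, ← map_add, ← sub_eq_zero, ← map_sub, Submodule.mkQ_apply,
      Submodule.Quotient.mk_eq_zero]
    exact ⟨-(m ⊗ₜ α ⊗ₜ β), by rw [map_neg, hd2B, smul_tmul', smul_tmul']; abel⟩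
  simpa using ker_tensorKaehlerD_le (LinearMap.range d2B).mkQ
    (fun b m α => by rw [hBM, ← smul_tmul', map_smul]; rfl) hleibniz

end Kaehler

end SecondaryHochschild

open SecondaryHochschild

theorem secondaryHochschild_of_base_kTriple_general
    (k : Type*) [CommRing k]
    (B : Type*) [CommRing B] [Algebra k B]
    (ε : B →ₐ[k] k)
    (M : Type*) [AddCommGroup M] [Module k M]
    -- M as a B-module via ε
    [Module B M] (hBM : ∀ (b : B) (m : M), b • m = ε b • m)
    [SMulCommClass B k M]
    -- the secondary Hochschild differentials ∂₁, ∂₂, ∂₃ of the triple (k,B,ε)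
    (p1 : M ⊗[k] k →ₗ[k] M)
    (p2 : M ⊗[k] k ⊗[k] k ⊗[k] B →ₗ[k] M ⊗[k] k)
    (hp2 : ∀ (m : M) (a b : k) (α : B),
      p2 (m ⊗ₜ[k] a ⊗ₜ[k] b ⊗ₜ[k] α) =
        ((a * ε α) • m) ⊗ₜ[k] b - m ⊗ₜ[k] (a * ε α * b) + ((b * ε α) • m) ⊗ₜ[k] a)
    (p3 : M ⊗[k] k ⊗[k] k ⊗[k] k ⊗[k] B ⊗[k] B ⊗[k] B →ₗ[k] M ⊗[k] k ⊗[k] k ⊗[k] B)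
    (hp3 : ∀ (m : M) (a b c : k) (α β γ : B),
      p3 (m ⊗ₜ[k] a ⊗ₜ[k] b ⊗ₜ[k] c ⊗ₜ[k] α ⊗ₜ[k] β ⊗ₜ[k] γ) =
        ((a * ε (α * β)) • m) ⊗ₜ[k] b ⊗ₜ[k] c ⊗ₜ[k] γ
        - m ⊗ₜ[k] (a * ε α * b) ⊗ₜ[k] c ⊗ₜ[k] (β * γ)
        + m ⊗ₜ[k] a ⊗ₜ[k] (b * ε γ * c) ⊗ₜ[k] (α * β)
        - ((c * ε (β * γ)) • m) ⊗ₜ[k] a ⊗ₜ[k] b ⊗ₜ[k] α)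
    -- the Hochschild differential d₂^B for B with coefficients in M
    (d2B : M ⊗[k] B ⊗[k] B →ₗ[k] M ⊗[k] B)
    (hd2B : ∀ (m : M) (α β : B),
      d2B (m ⊗ₜ[k] α ⊗ₜ[k] β) =
        (ε α • m) ⊗ₜ[k] β - m ⊗ₜ[k] (α * β) + (ε β • m) ⊗ₜ[k] α) :
    -- H₁((k,B,ε);M) = 0
    LinearMap.ker p1 ≤ LinearMap.range p2 ∧
    -- H₂((k,B,ε);M) ≅ H₁(B,M)
    Nonempty ((↥(LinearMap.ker p2) ⧸ (LinearMap.range p3).comap (LinearMap.ker p2).subtype)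
      ≃ₗ[k] ((M ⊗[k] B) ⧸ LinearMap.range d2B)) ∧
    -- H₁(B,M) ≅ M ⊗_B Ω¹_{B/k}
    Nonempty (((M ⊗[k] B) ⧸ LinearMap.range d2B) ≃ₗ[k] (M ⊗[B] Ω[B⁄k])) := by
  have : IsScalarTower k B M :=
    ⟨fun c b m => by rw [hBM, hBM, map_smul, smul_eq_mul, mul_smul]⟩
  refine ⟨fun x _ => secondaryD₂_surjective hp2 x, ⟨?_⟩, ⟨?_⟩⟩
  · have hcycles : (LinearMap.range p3).comap (LinearMap.ker p2).subtype =
        (LinearMap.range d2B).comap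
          ((absorbScalars₂ k B M).toLinearMap ∘ₗ (LinearMap.ker p2).subtype) :=
      Submodule.ext fun x => mem_range_secondaryD₃_iff hp2 hp3 hd2B x.2
    exact (Submodule.quotEquivOfEq _ _ hcycles).trans
      (Submodule.quotientComapEquivOfSupEqTop _ _
        (range_absorbScalars₂_comp_subtype_sup_eq_top hp2 hd2B))
  · have hker : LinearMap.ker (tensorKaehlerD k B M) = LinearMap.range d2B :=
      le_antisymm (ker_tensorKaehlerD_le_range_hochschildD₂ hBM hd2B)
        (range_hochschildD₂_le_ker_tensorKaehlerD hBM hd2B)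
    exact (Submodule.quotEquivOfEq _ _ hker.symm).trans
      ((tensorKaehlerD k B M).quotKerEquivOfSurjective tensorKaehlerD_surjective)

theorem secondaryHochschild_of_base_kTriple
    (k : Type*) [CommRing k]
    (B : Type*) [CommRing B] [Algebra k B]
    (ε : B →ₐ[k] k)
    (M : Type*) [AddCommGroup M] [Module k M]
    -- M as a B-module via ε
    [Module B M] (hBM : ∀ (b : B) (m : M), b • m = ε b • m)
    [SMulCommClass B k M]
    -- the secondary Hochschild differentials ∂₁, ∂₂, ∂₃ of the triple (k,B,ε)
    (p1 : M ⊗[k] k →ₗ[k] M)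
    (hp1 : ∀ (m : M) (a : k), p1 (m ⊗ₜ[k] a) = a • m - a • m)
    (p2 : M ⊗[k] k ⊗[k] k ⊗[k] B →ₗ[k] M ⊗[k] k)
    (hp2 : ∀ (m : M) (a b : k) (α : B),
      p2 (m ⊗ₜ[k] a ⊗ₜ[k] b ⊗ₜ[k] α) =
        ((a * ε α) • m) ⊗ₜ[k] b - m ⊗ₜ[k] (a * ε α * b) + ((b * ε α) • m) ⊗ₜ[k] a)
    (p3 : M ⊗[k] k ⊗[k] k ⊗[k] k ⊗[k] B ⊗[k] B ⊗[k] B →ₗ[k] M ⊗[k] k ⊗[k] k ⊗[k] B)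
    (hp3 : ∀ (m : M) (a b c : k) (α β γ : B),
      p3 (m ⊗ₜ[k] a ⊗ₜ[k] b ⊗ₜ[k] c ⊗ₜ[k] α ⊗ₜ[k] β ⊗ₜ[k] γ) =
        ((a * ε (α * β)) • m) ⊗ₜ[k] b ⊗ₜ[k] c ⊗ₜ[k] γ
        - m ⊗ₜ[k] (a * ε α * b) ⊗ₜ[k] c ⊗ₜ[k] (β * γ)
        + m ⊗ₜ[k] a ⊗ₜ[k] (b * ε γ * c) ⊗ₜ[k] (α * β)
        - ((c * ε (β * γ)) • m) ⊗ₜ[k] a ⊗ₜ[k] b ⊗ₜ[k] α)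
    -- the Hochschild differential d₂^B for B with coefficients in M
    (d2B : M ⊗[k] B ⊗[k] B →ₗ[k] M ⊗[k] B)
    (hd2B : ∀ (m : M) (α β : B),
      d2B (m ⊗ₜ[k] α ⊗ₜ[k] β) =
        (ε α • m) ⊗ₜ[k] β - m ⊗ₜ[k] (α * β) + (ε β • m) ⊗ₜ[k] α) :
    -- H₁((k,B,ε);M) = 0
    LinearMap.ker p1 ≤ LinearMap.range p2 ∧
    -- H₂((k,B,ε);M) ≅ H₁(B,M)
    Nonempty ((↥(LinearMap.ker p2) ⧸ (LinearMap.range p3).comap (LinearMap.ker p2).subtype)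
      ≃ₗ[k] ((M ⊗[k] B) ⧸ LinearMap.range d2B)) ∧
    -- H₁(B,M) ≅ M ⊗_B Ω¹_{B/k}
    Nonempty (((M ⊗[k] B) ⧸ LinearMap.range d2B) ≃ₗ[k] (M ⊗[B] Ω[B⁄k])) :=
  secondaryHochschild_of_base_kTriple_general k B ε M hBM p1 p2 hp2 p3 hp3 d2B hd2B
end
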